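/- arXiv:1010.6028 — 11 statements merged into one kernel-verified Lean document; each statement's English description precedes it below -/
import Mathlib

section
/- (Monotonicity of the Busemann cocycle) Let X be a metric space and α : [0,∞) → X a quasi-ray with origin a = α 0 and excess Δ(α) < ∞. Then for every ε > 0 there exists T ≥ 0 such that for all y ∈ X and all s ≥ t ≥ T one has b_{α(s)}(a, y) ≥ b_{α(t)}(a, y) − 2ε, where b_P(x,y) = dist x P − dist P y. -/
open Filter

/-- Local geodesics are 1-Lipschitz on `[0,∞)`. -/
lemma quasiray_lipschitz {X : Type*} [MetricSpace X] (α : ℝ → X)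
    (hloc : ∀ t₀ : ℝ, 0 ≤ t₀ → ∃ δ > 0, ∀ s t : ℝ, 0 ≤ s → 0 ≤ t →
      |s - t₀| ≤ δ → |t - t₀| ≤ δ → dist (α s) (α t) = |s - t|) :
    ∀ t s : ℝ, 0 ≤ t → t ≤ s → dist (α t) (α s) ≤ s - t := by
  intro t s ht hts
  set B : Set ℝ := {u : ℝ | u ∈ Set.Icc t s ∧ dist (α t) (α u) ≤ u - t} with hB
  have htB : t ∈ B := ⟨⟨le_refl t, hts⟩, by simp⟩
  have hne : B.Nonempty := ⟨t, htB⟩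
  have hbdd : BddAbove B := ⟨s, fun u hu => hu.1.2⟩
  set c := sSup B with hc
  have htc : t ≤ c := le_csSup hbdd htB
  have hcs : c ≤ s := csSup_le hne (fun u hu => hu.1.2)
  have hc0 : 0 ≤ c := ht.trans htc
  obtain ⟨δ, hδ, hiso⟩ := hloc c hc0
  have hcB : dist (α t) (α c) ≤ c - t := by
    obtain ⟨u, huB, hu⟩ := exists_lt_of_lt_csSup hne (by linarith : c - δ < c)
    have huc : u ≤ c := le_csSup hbdd huB
    have hu0 : 0 ≤ u := ht.trans huB.1.1
    have hd : dist (α u) (α c) = |u - c| :=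
      hiso u c hu0 hc0 (by rw [abs_le]; constructor <;> linarith)
        (by simp [abs_le]; linarith)
    calc dist (α t) (α c) ≤ dist (α t) (α u) + dist (α u) (α c) := dist_triangle _ _ _
      _ ≤ (u - t) + |u - c| := add_le_add huB.2 hd.le
      _ = c - t := by rw [abs_of_nonpos (by linarith)]; ring
  have hcseq : c = s := by
    by_contra h
    have hlt : c < s := lt_of_le_of_ne hcs h
    set v := min (c + δ) s with hv
    have hcv : c < v := lt_min (by linarith) hlt
    have hvs : v ≤ s := min_le_right _ _
    have hv0 : 0 ≤ v := hc0.trans hcv.le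
    have hvle : v ≤ c + δ := min_le_left _ _
    have hd : dist (α c) (α v) = |c - v| :=
      hiso c v hc0 hv0 (by simpa using hδ.le)
        (by rw [abs_le]; exact ⟨by linarith, by linarith⟩)
    have hvB : v ∈ B := by
      refine ⟨⟨htc.trans hcv.le, hvs⟩, ?_⟩
      calc dist (α t) (α v) ≤ dist (α t) (α c) + dist (α c) (α v) := dist_triangle _ _ _
        _ ≤ (c - t) + |c - v| := add_le_add hcB hd.le
        _ = v - t := by rw [abs_of_nonpos (by linarith)]; ring
    exact absurd (le_csSup hbdd hvB) (not_le.mpr hcv)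
  rw [← hcseq]
  exact hcB

/-- **Monotonicity of the Busemann cocycle.**
Let `α : [0,∞) → X` be a quasi-ray (a unit-speed local geodesic with finite excess),
with origin `a = α 0`. Then for every `ε > 0` there is `T ≥ 0` such that for every
`y ∈ X` and all `s ≥ t ≥ T` one has `b_{α(s)}(a,y) ≥ b_{α(t)}(a,y) − 2ε`, where
`b_P(x,y) = dist x P − dist P y`. -/
theorem busemann_cocycle_monotone {X : Type*} [MetricSpace X] (α : ℝ → X)
    (hloc : ∀ t₀ : ℝ, 0 ≤ t₀ → ∃ δ > 0, ∀ s t : ℝ, 0 ≤ s → 0 ≤ t →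
      |s - t₀| ≤ δ → |t - t₀| ≤ δ → dist (α s) (α t) = |s - t|)
    (hfin : BddAbove {d : ℝ | ∃ t s : ℝ, 0 ≤ t ∧ t ≤ s ∧
      d = (s - t) - dist (α t) (α s)}) :
    ∀ ε > 0, ∃ T : ℝ, 0 ≤ T ∧ ∀ y : X, ∀ t s : ℝ, T ≤ t → t ≤ s →
      dist (α 0) (α s) - dist (α s) y ≥
        (dist (α 0) (α t) - dist (α t) y) - 2 * ε := by
  intro ε hε
  have lip := quasiray_lipschitz α hloc
  set g : ℝ → ℝ := fun t => t - dist (α 0) (α t) with hg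
  obtain ⟨Δ, hΔ⟩ := hfin
  have hgΔ : ∀ t : ℝ, 0 ≤ t → g t ≤ Δ := fun t ht =>
    hΔ ⟨0, t, le_refl 0, ht, by simp [hg]⟩
  have hgmono : ∀ t s : ℝ, 0 ≤ t → t ≤ s → g t ≤ g s := by
    intro t s ht hts
    have h1 : dist (α 0) (α s) ≤ dist (α 0) (α t) + dist (α t) (α s) :=
      dist_triangle _ _ _
    have h2 := lip t s ht hts
    simp only [hg]; linarith
  set S : Set ℝ := g '' (Set.Ici 0) with hS
  have hSne : S.Nonempty := ⟨g 0, 0, Set.self_mem_Ici, rfl⟩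
  have hSbdd : BddAbove S := ⟨Δ, by rintro x ⟨t, ht, rfl⟩; exact hgΔ t ht⟩
  set L := sSup S with hL
  obtain ⟨x, ⟨T, hT0, rfl⟩, hx⟩ := exists_lt_of_lt_csSup hSne
    (by linarith : L - ε < L)
  refine ⟨T, hT0, ?_⟩
  intro y t s hTt hts
  have ht0 : 0 ≤ t := hT0.trans hTt
  have hs0 : 0 ≤ s := ht0.trans hts
  have hgt : g T ≤ g t := hgmono T t hT0 hTt
  have hgs : g s ≤ L := le_csSup hSbdd ⟨s, hs0, rfl⟩
  have hdts : dist (α t) (α s) ≤ s - t := lip t s ht0 hts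
  have htri : dist (α s) y ≤ dist (α s) (α t) + dist (α t) y := dist_triangle _ _ _
  have hst : dist (α s) (α t) = dist (α t) (α s) := dist_comm _ _
  have h1 : dist (α 0) (α s) - dist (α 0) (α t) = (s - t) - (g s - g t) := by
    simp only [hg]; ring
  have h2 : g s - g t ≤ ε := by linarith
  linarith
end

section
/- Let X be a metric space and α : [0,∞) → X a quasi-ray. Then for every x, y ∈ X the limit B_α(x,y) = lim_{t→∞} (dist x (α t) − dist (α t) y) exists, and the convergence of the functions (x,y) ↦ dist x (α t) − dist (α t) y to B_α is uniform on compact subsets of X × X. -/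
open Filter

/-- For a quasi-ray `α : [0,∞) → X` (unit-speed local geodesic with finite
excess), the Busemann function `B_α(x,y) = lim_{t→∞} (dist x (α t) − dist (α t) y)` exists
for all `x, y`, and the convergence of the cocycles is uniform on compact subsets of `X × X`. -/
theorem busemann_function_exists {X : Type*} [MetricSpace X] (α : ℝ → X)
    (hloc : ∀ t₀ : ℝ, 0 ≤ t₀ → ∃ δ > 0, ∀ s t : ℝ, 0 ≤ s → 0 ≤ t →
      |s - t₀| ≤ δ → |t - t₀| ≤ δ → dist (α s) (α t) = |s - t|)
    (hfin : BddAbove {d : ℝ | ∃ t s : ℝ, 0 ≤ t ∧ t ≤ s ∧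
      d = (s - t) - dist (α t) (α s)}) :
    ∃ B : X → X → ℝ,
      (∀ x y : X, Tendsto (fun t : ℝ => dist x (α t) - dist (α t) y)
        atTop (nhds (B x y))) ∧
      (∀ K : Set (X × X), IsCompact K →
        TendstoUniformlyOn (fun (t : ℝ) (p : X × X) => dist p.1 (α t) - dist (α t) p.2)
          (fun p => B p.1 p.2) atTop K) := by
  obtain ⟨Δ, hΔ⟩ := hfin
  have hΔ' : ∀ t s : ℝ, 0 ≤ t → t ≤ s → (s - t) - dist (α t) (α s) ≤ Δ :=
    fun t s ht hts => hΔ ⟨t, s, ht, hts, rfl⟩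
  -- `α` is 1-Lipschitz on `[0, ∞)`
  have lip : ∀ a b : ℝ, 0 ≤ a → a ≤ b → dist (α a) (α b) ≤ b - a := by
    intro a b ha hab
    set S := {t : ℝ | t ∈ Set.Icc a b ∧ dist (α a) (α t) ≤ t - a} with hS
    have hne : a ∈ S := ⟨⟨le_refl a, hab⟩, by simp⟩
    have hbdd : BddAbove S := ⟨b, fun t ht => ht.1.2⟩
    set c := sSup S with hc
    have hac : a ≤ c := le_csSup hbdd hne
    have hcb : c ≤ b := csSup_le ⟨a, hne⟩ (fun t ht => ht.1.2)
    have hc0 : 0 ≤ c := ha.trans hac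
    obtain ⟨δ, hδ, hiso⟩ := hloc c hc0
    obtain ⟨t, htS, htδ⟩ : ∃ t ∈ S, c - δ < t :=
      exists_lt_of_lt_csSup ⟨a, hne⟩ (by linarith)
    have htc : t ≤ c := le_csSup hbdd htS
    have ht0 : 0 ≤ t := ha.trans htS.1.1
    have hPc : dist (α a) (α c) ≤ c - a := by
      have h1 : dist (α t) (α c) = |t - c| :=
        hiso t c ht0 hc0 (by rw [abs_le]; constructor <;> linarith) (by simpa using hδ.le)
      have h2 : |t - c| = c - t := by rw [abs_sub_comm]; exact abs_of_nonneg (by linarith)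
      calc dist (α a) (α c) ≤ dist (α a) (α t) + dist (α t) (α c) := dist_triangle _ _ _
        _ ≤ (t - a) + (c - t) := by rw [h1, h2]; linarith [htS.2]
        _ = c - a := by ring
    rcases eq_or_lt_of_le hcb with h | h
    · rw [← h]; exact hPc
    · exfalso
      set t' := min b (c + δ) with ht'
      have hct' : c < t' := lt_min h (by linarith)
      have ht'δ : t' ≤ c + δ := min_le_right _ _
      have ht'0 : 0 ≤ t' := hc0.trans hct'.le
      have h3 : dist (α c) (α t') = t' - c := by
        rw [hiso c t' hc0 ht'0 (by simpa using hδ.le)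
          (by rw [abs_le]; constructor <;> linarith)]
        rw [abs_sub_comm]; exact abs_of_nonneg (by linarith)
      have ht'S : t' ∈ S := by
        refine ⟨⟨hac.trans hct'.le, min_le_left _ _⟩, ?_⟩
        calc dist (α a) (α t') ≤ dist (α a) (α c) + dist (α c) (α t') := dist_triangle _ _ _
          _ ≤ (c - a) + (t' - c) := by rw [h3]; linarith
          _ = t' - a := by ring
      have := le_csSup hbdd ht'S
      linarith
  -- the auxiliary antitone functions
  set g : X → ℝ → ℝ := fun x t => dist x (α (max t 0)) - max t 0 with hg
  have g_anti : ∀ x, Antitone (g x) := by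
    intro x t s hts
    have h1 : max t 0 ≤ max s 0 := max_le_max hts le_rfl
    have h2 : dist x (α (max s 0)) ≤ dist x (α (max t 0)) + (max s 0 - max t 0) := by
      calc dist x (α (max s 0)) ≤ dist x (α (max t 0)) + dist (α (max t 0)) (α (max s 0)) :=
            dist_triangle _ _ _
        _ ≤ _ := by linarith [lip (max t 0) (max s 0) (le_max_right t 0) h1]
    simp only [hg]
    linarith
  have g_bdd : ∀ x, BddBelow (Set.range (g x)) := by
    intro x
    refine ⟨-(Δ + dist x (α 0)), ?_⟩
    rintro _ ⟨t, rfl⟩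
    have h1 := hΔ' 0 (max t 0) le_rfl (le_max_right t 0)
    have h2 : dist (α 0) (α (max t 0)) ≤ dist (α 0) x + dist x (α (max t 0)) := dist_triangle _ _ _
    have h3 : dist (α 0) x = dist x (α 0) := dist_comm _ _
    simp only [hg]
    linarith
  set L : X → ℝ := fun x => ⨅ t, g x t with hLdef
  have hL : ∀ x, Tendsto (g x) atTop (nhds (L x)) :=
    fun x => tendsto_atTop_ciInf (g_anti x) (g_bdd x)
  have hL' : ∀ x, Tendsto (fun t => dist x (α t) - t) atTop (nhds (L x)) := by
    intro x
    refine (hL x).congr' ?_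
    filter_upwards [eventually_ge_atTop (0 : ℝ)] with t ht
    simp only [hg, max_eq_left ht]
  have hBx : ∀ x y : X, Tendsto (fun t : ℝ => dist x (α t) - dist (α t) y)
      atTop (nhds (L x - L y)) := by
    intro x y
    have := (hL' x).sub (hL' y)
    refine Tendsto.congr (fun t => ?_) this
    rw [dist_comm (α t) y]; ring
  -- `L` is `1`-Lipschitz
  have hLlip : ∀ x x' : X, |L x - L x'| ≤ dist x x' := by
    have key : ∀ x x' : X, L x - L x' ≤ dist x x' := by
      intro x x'
      have h1 : ∀ t : ℝ, L x - dist x x' ≤ g x' t := by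
        intro t
        have h2 : g x t ≤ g x' t + dist x x' := by
          simp only [hg]
          linarith [dist_triangle x x' (α (max t 0))]
        linarith [ciInf_le (g_bdd x) t]
      linarith [le_ciInf h1]
    intro x x'
    rw [abs_le]
    constructor
    · have hk := key x' x
      rw [dist_comm x' x] at hk
      linarith
    · exact key x x'
  refine ⟨fun x y => L x - L y, hBx, ?_⟩
  intro K hK
  rw [Metric.tendstoUniformlyOn_iff]
  intro ε hε
  -- Lipschitz bounds for the cocycles and the limit
  have flip : ∀ (t : ℝ) (p q : X × X),
      |(dist p.1 (α t) - dist (α t) p.2) - (dist q.1 (α t) - dist (α t) q.2)|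
        ≤ dist p.1 q.1 + dist p.2 q.2 := by
    intro t p q
    have h1 : |dist p.1 (α t) - dist q.1 (α t)| ≤ dist p.1 q.1 := abs_dist_sub_le _ _ _
    have h2 : |dist (α t) p.2 - dist (α t) q.2| ≤ dist p.2 q.2 := by
      rw [dist_comm (α t) p.2, dist_comm (α t) q.2]
      exact abs_dist_sub_le _ _ _
    calc |(dist p.1 (α t) - dist (α t) p.2) - (dist q.1 (α t) - dist (α t) q.2)|
        = |(dist p.1 (α t) - dist q.1 (α t)) - (dist (α t) p.2 - dist (α t) q.2)| := by
          ring_nf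
      _ ≤ |dist p.1 (α t) - dist q.1 (α t)| + |dist (α t) p.2 - dist (α t) q.2| :=
          abs_sub _ _
      _ ≤ _ := add_le_add h1 h2
  have Blip : ∀ p q : X × X, |(L p.1 - L p.2) - (L q.1 - L q.2)| ≤ dist p.1 q.1 + dist p.2 q.2 := by
    intro p q
    calc |(L p.1 - L p.2) - (L q.1 - L q.2)| = |(L p.1 - L q.1) - (L p.2 - L q.2)| := by ring_nf
      _ ≤ |L p.1 - L q.1| + |L p.2 - L q.2| := abs_sub _ _
      _ ≤ _ := add_le_add (hLlip _ _) (hLlip _ _)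
  -- finite cover of K
  have hcov : K ⊆ ⋃ p ∈ K, Metric.ball p (ε/6) :=
    fun p hp => Set.mem_biUnion hp (Metric.mem_ball_self (by linarith))
  obtain ⟨b, hbK, hbfin, hbcov⟩ :=
    hK.elim_finite_subcover_image (fun p _ => Metric.isOpen_ball) hcov
  have hev : ∀ᶠ t in atTop, ∀ q ∈ b,
      |(L q.1 - L q.2) - (dist q.1 (α t) - dist (α t) q.2)| < ε/6 := by
    rw [eventually_all_finite hbfin]
    intro q _
    have := Metric.tendsto_nhds.mp (hBx q.1 q.2) (ε/6) (by linarith)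
    filter_upwards [this] with t ht
    rw [Real.dist_eq] at ht
    rw [abs_sub_comm]
    exact ht
  filter_upwards [hev] with t ht p hp
  obtain ⟨q, hqb, hpq⟩ : ∃ q ∈ b, p ∈ Metric.ball q (ε/6) := by
    have := hbcov hp
    simpa using this
  have hd : dist p q < ε/6 := Metric.mem_ball.mp hpq
  have hd1 : dist p.1 q.1 < ε/6 := lt_of_le_of_lt (by rw [Prod.dist_eq]; exact le_max_left _ _) hd
  have hd2 : dist p.2 q.2 < ε/6 := lt_of_le_of_lt (by rw [Prod.dist_eq]; exact le_max_right _ _) hd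
  have h2 := Blip p q
  have h3 := ht q hqb
  have t1 : |(L p.1 - L p.2) - (dist p.1 (α t) - dist (α t) p.2)|
      ≤ |(L p.1 - L p.2) - (L q.1 - L q.2)|
        + |(L q.1 - L q.2) - (dist p.1 (α t) - dist (α t) p.2)| := abs_sub_le _ _ _
  have t2 : |(L q.1 - L q.2) - (dist p.1 (α t) - dist (α t) p.2)|
      ≤ |(L q.1 - L q.2) - (dist q.1 (α t) - dist (α t) q.2)|
        + |(dist q.1 (α t) - dist (α t) q.2) - (dist p.1 (α t) - dist (α t) p.2)| :=
    abs_sub_le _ _ _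
  have t3 := flip t q p
  rw [dist_comm q.1 p.1, dist_comm q.2 p.2] at t3
  rw [Real.dist_eq]
  linarith
end

section
/- Let X be a metric space, β : [0,∞) → X a quasi-ray, and γ : [0,∞) → X a ray which is a coray to β: there exist sequences s_n → ∞, t_n → ∞ and isometric embeddings γ_n : [0, s_n] → X with γ_n 0 → γ 0, γ_n s_n = β t_n, and γ_n → γ uniformly on compact subsets of [0,∞). Then B_β(γ 0, γ s) = s for all s ≥ 0; in particular B_β(γ 0, γ s) = dist (γ 0) (γ s). -/
open Filter

/-- If `γ` is a ray which is a coray to the quasi-ray `β`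
(i.e. `γ` is a locally uniform limit of geodesic segments `γ_n : [0,s_n] → X` with
`γ_n 0 → γ 0` and `γ_n s_n = β t_n`, `s_n, t_n → ∞`), then `B_β(γ 0, γ s) = s`
for all `s ≥ 0`; in particular `B_β(γ 0, γ s) = dist (γ 0) (γ s)`. -/
theorem busemann_along_coray {X : Type*} [MetricSpace X] (β γ : ℝ → X)
    (hβloc : ∀ t₀ : ℝ, 0 ≤ t₀ → ∃ δ > 0, ∀ s t : ℝ, 0 ≤ s → 0 ≤ t →
      |s - t₀| ≤ δ → |t - t₀| ≤ δ → dist (β s) (β t) = |s - t|)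
    (hβfin : BddAbove {d : ℝ | ∃ t s : ℝ, 0 ≤ t ∧ t ≤ s ∧
      d = (s - t) - dist (β t) (β s)})
    (hγ : ∀ s t : ℝ, 0 ≤ s → 0 ≤ t → dist (γ s) (γ t) = |s - t|)
    (sn tn : ℕ → ℝ) (γn : ℕ → ℝ → X)
    (hsn : Tendsto sn atTop atTop) (htn : Tendsto tn atTop atTop)
    (hseg : ∀ n, ∀ u v : ℝ, 0 ≤ u → u ≤ sn n → 0 ≤ v → v ≤ sn n →
      dist (γn n u) (γn n v) = |u - v|)
    (horig : Tendsto (fun n => γn n 0) atTop (nhds (γ 0)))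
    (hend : ∀ n, γn n (sn n) = β (tn n))
    (hconv : ∀ T : ℝ, 0 ≤ T →
      TendstoUniformlyOn (fun n u => γn n u) γ atTop (Set.Icc 0 T))
    (B : X → X → ℝ)
    (hB : ∀ x y : X, Tendsto (fun t : ℝ => dist x (β t) - dist (β t) y)
      atTop (nhds (B x y))) :
    ∀ s : ℝ, 0 ≤ s →
      B (γ 0) (γ s) = s ∧ B (γ 0) (γ s) = dist (γ 0) (γ s) := by
  intro s hs
  have hdist : dist (γ 0) (γ s) = s := by
    rw [hγ 0 s le_rfl hs, abs_sub_comm]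
    simp [abs_of_nonneg hs]
  set x := γ 0 with hx
  set y := γ s with hy
  -- limit of the Busemann quotient along tn
  have hBlim : Tendsto (fun n => dist x (β (tn n)) - dist (β (tn n)) y)
      atTop (nhds (B x y)) := (hB x y).comp htn
  -- γn n s → γ s
  have hpt : Tendsto (fun n => dist (γn n s) y) atTop (nhds 0) := by
    have h := hconv s hs
    rw [Metric.tendstoUniformlyOn_iff] at h
    rw [Metric.tendsto_nhds]
    intro ε hε
    filter_upwards [h ε hε] with n hn
    have := hn s ⟨hs, le_rfl⟩
    simp only [Real.dist_eq, sub_zero, abs_of_nonneg dist_nonneg]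
    calc dist (γn n s) y = dist y (γn n s) := dist_comm _ _
      _ < ε := this
  have h0 : Tendsto (fun n => dist (γn n 0) x) atTop (nhds 0) := by
    have := tendsto_iff_dist_tendsto_zero.mp horig
    simpa using this
  have hbnd : Tendsto (fun n => dist (γn n 0) x + dist (γn n s) y)
      atTop (nhds 0) := by simpa using h0.add hpt
  have hkey : Tendsto (fun n => dist x (β (tn n)) - dist (β (tn n)) y)
      atTop (nhds s) := by
    rw [← tendsto_sub_nhds_zero_iff]
    apply squeeze_zero_norm' _ hbnd
    filter_upwards [hsn.eventually_ge_atTop s] with n hn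
    have hsn0 : (0:ℝ) ≤ sn n := le_trans hs hn
    have e1 : dist (γn n 0) (β (tn n)) = sn n := by
      rw [← hend n, hseg n 0 (sn n) le_rfl hsn0 hsn0 le_rfl]
      simp [abs_of_nonneg hsn0]
    have e2 : dist (β (tn n)) (γn n s) = sn n - s := by
      rw [← hend n, dist_comm, hseg n s (sn n) hs hn hsn0 le_rfl,
        abs_of_nonpos (by linarith)]
      ring
    have t1 : |dist x (β (tn n)) - sn n| ≤ dist (γn n 0) x := by
      calc |dist x (β (tn n)) - sn n|
          = |dist x (β (tn n)) - dist (γn n 0) (β (tn n))| := by rw [e1]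
        _ ≤ dist x (γn n 0) := abs_dist_sub_le _ _ _
        _ = dist (γn n 0) x := dist_comm _ _
    have t2 : |dist (β (tn n)) y - (sn n - s)| ≤ dist (γn n s) y := by
      calc |dist (β (tn n)) y - (sn n - s)|
          = |dist (β (tn n)) y - dist (β (tn n)) (γn n s)| := by rw [e2]
        _ = |dist y (β (tn n)) - dist (γn n s) (β (tn n))| := by
            rw [dist_comm (β (tn n)) y, dist_comm (β (tn n)) (γn n s)]
        _ ≤ dist y (γn n s) := abs_dist_sub_le _ _ _
        _ = dist (γn n s) y := dist_comm _ _
    have : dist x (β (tn n)) - dist (β (tn n)) y - s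
        = (dist x (β (tn n)) - sn n) - (dist (β (tn n)) y - (sn n - s)) := by ring
    rw [Real.norm_eq_abs, this]
    calc |(dist x (β (tn n)) - sn n) - (dist (β (tn n)) y - (sn n - s))|
        ≤ |dist x (β (tn n)) - sn n| + |dist (β (tn n)) y - (sn n - s)| :=
          abs_sub _ _
      _ ≤ dist (γn n 0) x + dist (γn n s) y := add_le_add t1 t2
  have hBs : B x y = s := tendsto_nhds_unique hBlim hkey
  exact ⟨hBs, by rw [hBs, hdist]⟩
end

section
/- Let X be a metric space and α, β : [0,∞) → X rays with origins a = α 0 and b = β 0. Suppose α is a coray to β, β is a coray to α, and B_α(a,b) = B_β(a,b). Then the Busemann functions coincide: B_α(x,y) = B_β(x,y) for all x, y ∈ X. -/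
open Filter

/-- `γ` is a coray to `β`: there are sequences `s_n → ∞`, `t_n → ∞` and isometric
embeddings `γ_n : [0, s_n] → X` with `γ_n 0 → γ 0`, `γ_n s_n = β t_n`, and `γ_n → γ`
uniformly on compact subsets of `[0,∞)`. -/
def IsCoray {X : Type*} [MetricSpace X] (γ β : ℝ → X) : Prop :=
  ∃ (sn tn : ℕ → ℝ) (γn : ℕ → ℝ → X),
    Filter.Tendsto sn Filter.atTop Filter.atTop ∧
    Filter.Tendsto tn Filter.atTop Filter.atTop ∧
    (∀ n, ∀ u v : ℝ, 0 ≤ u → u ≤ sn n → 0 ≤ v → v ≤ sn n →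
      dist (γn n u) (γn n v) = |u - v|) ∧
    Filter.Tendsto (fun n => γn n 0) Filter.atTop (nhds (γ 0)) ∧
    (∀ n, γn n (sn n) = β (tn n)) ∧
    (∀ T : ℝ, 0 ≤ T →
      TendstoUniformlyOn (fun n u => γn n u) γ Filter.atTop (Set.Icc 0 T))

section Aux
variable {X : Type*} [MetricSpace X]

/-- The horofunction-type limit is `1`-Lipschitz. -/
lemma buse_lip (β : ℝ → X) (f : X → ℝ)
    (hf : ∀ x, Tendsto (fun t : ℝ => dist x (β t) - t) atTop (nhds (f x)))
    (x y : X) : f x ≤ f y + dist x y :=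
  le_of_tendsto_of_tendsto' (hf x) ((hf y).add tendsto_const_nhds)
    (fun t => by have := dist_triangle x y (β t); linarith)

/-- The horofunction is bounded above by each term of the defining (antitone) family. -/
lemma buse_le (β : ℝ → X)
    (hβ : ∀ s t : ℝ, 0 ≤ s → 0 ≤ t → dist (β s) (β t) = |s - t|)
    (f : X → ℝ)
    (hf : ∀ x, Tendsto (fun t : ℝ => dist x (β t) - t) atTop (nhds (f x)))
    (x : X) (t : ℝ) (ht : 0 ≤ t) : f x ≤ dist x (β t) - t := by
  refine le_of_tendsto (hf x) ?_
  filter_upwards [eventually_ge_atTop t] with s hs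
  have h0s : 0 ≤ s := ht.trans hs
  have hd : dist (β t) (β s) = s - t := by
    rw [hβ t s ht h0s, abs_sub_comm, abs_of_nonneg (by linarith)]
  have := dist_triangle x (β t) (β s)
  linarith

/-- Along a coray `γ` to `β`, the horofunction of `β` decreases at unit speed. -/
lemma coray_busemann (β γ : ℝ → X)
    (hβ : ∀ s t : ℝ, 0 ≤ s → 0 ≤ t → dist (β s) (β t) = |s - t|)
    (hγ : ∀ s t : ℝ, 0 ≤ s → 0 ≤ t → dist (γ s) (γ t) = |s - t|)
    (f : X → ℝ)
    (hf : ∀ x, Tendsto (fun t : ℝ => dist x (β t) - t) atTop (nhds (f x)))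
    (hc : IsCoray γ β) :
    ∀ u : ℝ, 0 ≤ u → f (γ u) = f (γ 0) - u := by
  obtain ⟨sn, tn, γn, hsn, htn, hiso, h0, hend, hunif⟩ := hc
  intro u hu
  have hlow : f (γ 0) - u ≤ f (γ u) := by
    have := buse_lip β f hf (γ 0) (γ u)
    have hd : dist (γ 0) (γ u) = u := by
      rw [hγ 0 u le_rfl hu, abs_sub_comm, abs_of_nonneg (by linarith)]; ring
    linarith
  have htd1 : Tendsto (fun n => dist (γ u) (γn n u)) atTop (nhds 0) := by
    have h1 : Tendsto (fun n => γn n u) atTop (nhds (γ u)) :=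
      (hunif u hu).tendsto_at (Set.mem_Icc.mpr ⟨hu, le_rfl⟩)
    have := tendsto_iff_dist_tendsto_zero.mp h1
    simpa [dist_comm] using this
  have htd2 : Tendsto (fun n => dist (γ 0) (β (tn n)) - tn n) atTop (nhds (f (γ 0))) :=
    (hf (γ 0)).comp htn
  have htd3 : Tendsto (fun n => dist (γn n 0) (γ 0)) atTop (nhds 0) := by
    simpa using tendsto_iff_dist_tendsto_zero.mp h0
  have htd : Tendsto
      (fun n => dist (γ u) (γn n u) + (dist (γ 0) (β (tn n)) - tn n)
        + dist (γn n 0) (γ 0) - u) atTop (nhds (0 + f (γ 0) + 0 - u)) :=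
    ((htd1.add htd2).add htd3).sub tendsto_const_nhds
  have hupp : f (γ u) ≤ f (γ 0) - u := by
    have hev : ∀ᶠ n in atTop,
        f (γ u) ≤ dist (γ u) (γn n u) + (dist (γ 0) (β (tn n)) - tn n)
          + dist (γn n 0) (γ 0) - u := by
      filter_upwards [hsn.eventually_ge_atTop u, htn.eventually_ge_atTop 0] with n hsu htn0
      have hsn0 : 0 ≤ sn n := hu.trans hsu
      have hlipf : f (γ u) ≤ f (γn n u) + dist (γ u) (γn n u) := buse_lip β f hf _ _
      have hub : f (γn n u) ≤ dist (γn n u) (β (tn n)) - tn n :=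
        buse_le β hβ f hf _ _ htn0
      have hd1 : dist (γn n u) (β (tn n)) = sn n - u := by
        rw [← hend n, hiso n u (sn n) hu hsu hsn0 le_rfl, abs_sub_comm,
          abs_of_nonneg (by linarith)]
      have hd2 : sn n = dist (γn n 0) (β (tn n)) := by
        rw [← hend n, hiso n 0 (sn n) le_rfl hsn0 hsn0 le_rfl, abs_sub_comm,
          abs_of_nonneg (by linarith)]; ring
      have htri : dist (γn n 0) (β (tn n)) ≤ dist (γn n 0) (γ 0) + dist (γ 0) (β (tn n)) :=
        dist_triangle _ _ _
      linarith
    have := ge_of_tendsto htd hev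
    linarith
  linarith

end Aux

/-- If the rays `α, β` are corays to each other and their Busemann
functions agree at the pair of origins `(a,b) = (α 0, β 0)`, then `B_α = B_β`. -/
theorem busemann_eq_of_mutually_coray {X : Type*} [MetricSpace X] (α β : ℝ → X)
    (hα : ∀ s t : ℝ, 0 ≤ s → 0 ≤ t → dist (α s) (α t) = |s - t|)
    (hβ : ∀ s t : ℝ, 0 ≤ s → 0 ≤ t → dist (β s) (β t) = |s - t|)
    (hαβ : IsCoray α β) (hβα : IsCoray β α)
    (Bα Bβ : X → X → ℝ)
    (hBα : ∀ x y : X, Tendsto (fun t : ℝ => dist x (α t) - dist (α t) y)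
      atTop (nhds (Bα x y)))
    (hBβ : ∀ x y : X, Tendsto (fun t : ℝ => dist x (β t) - dist (β t) y)
      atTop (nhds (Bβ x y)))
    (horig : Bα (α 0) (β 0) = Bβ (α 0) (β 0)) :
    ∀ x y : X, Bα x y = Bβ x y := by
  set fα : X → ℝ := fun x => Bα x (α 0) with hfαdef
  set fβ : X → ℝ := fun x => Bβ x (β 0) with hfβdef
  have hfα : ∀ x, Tendsto (fun t : ℝ => dist x (α t) - t) atTop (nhds (fα x)) := by
    intro x
    refine (hBα x (α 0)).congr' ?_
    filter_upwards [eventually_ge_atTop (0 : ℝ)] with t ht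
    rw [hα t 0 ht le_rfl, abs_of_nonneg (by linarith)]
    ring
  have hfβ : ∀ x, Tendsto (fun t : ℝ => dist x (β t) - t) atTop (nhds (fβ x)) := by
    intro x
    refine (hBβ x (β 0)).congr' ?_
    filter_upwards [eventually_ge_atTop (0 : ℝ)] with t ht
    rw [hβ t 0 ht le_rfl, abs_of_nonneg (by linarith)]
    ring
  have hsplitα : ∀ x y, Bα x y = fα x - fα y := by
    intro x y
    refine tendsto_nhds_unique (hBα x y) (((hfα x).sub (hfα y)).congr fun t => ?_)
    rw [dist_comm (α t) y]; ring
  have hsplitβ : ∀ x y, Bβ x y = fβ x - fβ y := by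
    intro x y
    refine tendsto_nhds_unique (hBβ x y) (((hfβ x).sub (hfβ y)).congr fun t => ?_)
    rw [dist_comm (β t) y]; ring
  have hfα0 : fα (α 0) = 0 :=
    tendsto_nhds_unique (hBα (α 0) (α 0))
      (tendsto_const_nhds.congr fun t => by rw [dist_comm (α t) (α 0)]; ring)
  have hfβ0 : fβ (β 0) = 0 :=
    tendsto_nhds_unique (hBβ (β 0) (β 0))
      (tendsto_const_nhds.congr fun t => by rw [dist_comm (β t) (β 0)]; ring)
  -- along each ray the other horofunction decreases at unit speed
  have hkβ : ∀ u : ℝ, 0 ≤ u → fβ (α u) = fβ (α 0) - u :=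
    coray_busemann β α hβ hα fβ hfβ hαβ
  have hkα : ∀ u : ℝ, 0 ≤ u → fα (β u) = fα (β 0) - u :=
    coray_busemann α β hα hβ fα hfα hβα
  -- the origin condition
  have hob : fα (β 0) = -(fβ (α 0)) := by
    have h1 := hsplitα (α 0) (β 0)
    have h2 := hsplitβ (α 0) (β 0)
    rw [horig] at h1
    rw [h2, hfα0, hfβ0] at h1
    linarith
  -- the two inequalities
  have h1 : ∀ x, fβ x - fβ (α 0) ≤ fα x := by
    intro x
    refine ge_of_tendsto (hfα x) ?_
    filter_upwards [eventually_ge_atTop (0 : ℝ)] with t ht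
    have hl := buse_lip β fβ hfβ x (α t)
    have hk := hkβ t ht
    linarith
  have h2 : ∀ x, fα x - fα (β 0) ≤ fβ x := by
    intro x
    refine ge_of_tendsto (hfβ x) ?_
    filter_upwards [eventually_ge_atTop (0 : ℝ)] with t ht
    have hl := buse_lip α fα hfα x (β t)
    have hk := hkα t ht
    linarith
  have heq : ∀ x, fα x = fβ x - fβ (α 0) := by
    intro x
    have ha := h1 x
    have hb := h2 x
    rw [hob] at hb
    linarith
  intro x y
  rw [hsplitα x y, hsplitβ x y, heq x, heq y]
  ring
end

section
/- Let X̃ be a metric space, G a group acting on X̃ by isometries, and D(x,y) = inf_{g ∈ G} dist x (g • y) the induced quotient pseudo-distance. Let α̃ : [0,∞) → X̃ be a ray (dist (α̃ s) (α̃ t) = |s − t| for all s,t). Then the function t ↦ t − D(α̃ 0, α̃ t) is nondecreasing, and sup_{0 ≤ t ≤ s} ((s − t) − D(α̃ t, α̃ s)) = lim_{t→∞} (t − D(α̃ 0, α̃ t)) (an equality in [0,∞]). Thus the excess of the projected curve equals the limit of the displacement defect along the lift. -/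
/-!
Write `D` for the orbit pseudo-distance. Since `G` acts by isometries, `D` is `1`-Lipschitz in
each variable, so along the ray `D(α 0, α s) ≤ D(α 0, α t) + (s - t)`: the defect
`t ↦ t - D(α 0, α t)` is nondecreasing and its limit is its supremum. The defect at `s` is the
excess of the pair `(0, s)`, and conversely `D(α 0, α s) ≤ t + D(α t, α s)` bounds the excess of
any pair `(t, s)` by the defect at `s`; hence both suprema agree.
-/

open Filter Set
open scoped ENNReal

section OrbitDist

variable {X G : Type*} [PseudoMetricSpace X] [SMul G X]

lemma bddBelow_range_dist_smul (x y : X) : BddBelow (range fun g : G => dist x (g • y)) :=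
  ⟨0, by rintro _ ⟨g, rfl⟩; exact dist_nonneg⟩

variable [Nonempty G]

lemma iInf_dist_smul_le_dist_add (x y z : X) :
    ⨅ g : G, dist x (g • z) ≤ dist x y + ⨅ g : G, dist y (g • z) := by
  rw [add_comm]
  refine le_ciInf_add fun g => (ciInf_le (bddBelow_range_dist_smul x z) g).trans ?_
  linarith [dist_triangle x y (g • z)]

lemma iInf_dist_smul_le_add_dist (hiso : ∀ g : G, Isometry (fun x : X => g • x)) (x y z : X) :
    ⨅ g : G, dist x (g • z) ≤ (⨅ g : G, dist x (g • y)) + dist y z :=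
  le_ciInf_add fun g => (ciInf_le (bddBelow_range_dist_smul x z) g).trans <| by
    simpa only [(hiso g).dist_eq] using dist_triangle x (g • y) (g • z)

end OrbitDist

lemma dist_ray_of_le {X : Type*} [PseudoMetricSpace X] {α : ℝ → X}
    (hray : ∀ s t : ℝ, 0 ≤ s → 0 ≤ t → dist (α s) (α t) = |s - t|) {t s : ℝ}
    (ht : 0 ≤ t) (hts : t ≤ s) : dist (α t) (α s) = s - t := by
  rw [hray t s ht (ht.trans hts), abs_sub_comm, abs_of_nonneg (sub_nonneg.2 hts)]

lemma monotone_ofReal_of_monotoneOn_Ici {u : ℝ → ℝ} (hu : MonotoneOn u (Ici 0))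
    (hneg : ∀ t < 0, u t ≤ 0) : Monotone fun t => ENNReal.ofReal (u t) := by
  intro t s hts
  rcases lt_or_ge t 0 with ht | ht
  · simp [ENNReal.ofReal_eq_zero.2 (hneg t ht)]
  · exact ENNReal.ofReal_le_ofReal (hu ht (mem_Ici.2 (ht.trans hts)) hts)

lemma iSup_ofReal_eq_iSup_ofReal_of_le {u : ℝ → ℝ} {e : ℝ → ℝ → ℝ} (hneg : ∀ t < 0, u t ≤ 0)
    (hle : ∀ t s, 0 ≤ t → t ≤ s → e t s ≤ u s) (hzero : ∀ s, 0 ≤ s → u s ≤ e 0 s) :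
    ⨆ s, ENNReal.ofReal (u s) = ⨆ (t : ℝ) (s : ℝ) (_ : 0 ≤ t ∧ t ≤ s), ENNReal.ofReal (e t s) := by
  refine le_antisymm (iSup_le fun s => ?_) (iSup₂_le fun t s => iSup_le fun hts =>
    le_iSup_of_le s (ENNReal.ofReal_le_ofReal (hle t s hts.1 hts.2)))
  rcases lt_or_ge s 0 with hs | hs
  · simp [ENNReal.ofReal_eq_zero.2 (hneg s hs)]
  · exact le_iSup₂_of_le 0 s <| le_iSup_of_le ⟨le_rfl, hs⟩ (ENNReal.ofReal_le_ofReal (hzero s hs))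

/-- Let `G` act by isometries on a metric space `X̃`, and let
`D x y = inf_{g ∈ G} dist x (g • y)` be the quotient pseudo-distance. For a ray
`α̃` of `X̃`, the function `t ↦ t − D(α̃ 0, α̃ t)` is nondecreasing, and the excess
`sup_{0 ≤ t ≤ s} ((s − t) − D(α̃ t, α̃ s))` of the projected curve equals
`lim_{t→∞} (t − D(α̃ 0, α̃ t))`, an equality in `[0,∞]`. -/
theorem excess_of_projection {X : Type*} [MetricSpace X] {G : Type*} [Group G]
    [MulAction G X] (hiso : ∀ g : G, Isometry (fun x : X => g • x))
    (α : ℝ → X)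
    (hray : ∀ s t : ℝ, 0 ≤ s → 0 ≤ t → dist (α s) (α t) = |s - t|) :
    (∀ t s : ℝ, 0 ≤ t → t ≤ s →
      t - (⨅ g : G, dist (α 0) (g • α t)) ≤ s - (⨅ g : G, dist (α 0) (g • α s))) ∧
    Tendsto (fun t : ℝ => ENNReal.ofReal (t - ⨅ g : G, dist (α 0) (g • α t)))
      atTop
      (nhds (⨆ (t : ℝ) (s : ℝ) (_ : 0 ≤ t ∧ t ≤ s),
        ENNReal.ofReal ((s - t) - ⨅ g : G, dist (α t) (g • α s)))) := by
  have defect_mono : ∀ t s : ℝ, 0 ≤ t → t ≤ s →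
      t - (⨅ g : G, dist (α 0) (g • α t)) ≤ s - (⨅ g : G, dist (α 0) (g • α s)) := by
    intro t s ht hts
    linarith [iInf_dist_smul_le_add_dist hiso (α 0) (α t) (α s), dist_ray_of_le hray ht hts]
  refine ⟨defect_mono, ?_⟩
  have defect_nonpos : ∀ t < 0, t - ⨅ g : G, dist (α 0) (g • α t) ≤ 0 := fun t ht => by
    linarith [Real.iInf_nonneg fun g : G => dist_nonneg (x := α 0) (y := g • α t)]
  have excess_le_defect : ∀ t s : ℝ, 0 ≤ t → t ≤ s →
      (s - t) - ⨅ g : G, dist (α t) (g • α s) ≤ s - ⨅ g : G, dist (α 0) (g • α s) := by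
    intro t s ht hts
    linarith [iInf_dist_smul_le_dist_add (G := G) (α 0) (α t) (α s), dist_ray_of_le hray le_rfl ht]
  rw [← iSup_ofReal_eq_iSup_ofReal_of_le defect_nonpos excess_le_defect fun s _ => by simp]
  exact tendsto_atTop_iSup (monotone_ofReal_of_monotoneOn_Ici
    (fun t ht s _ hts => defect_mono t s ht hts) defect_nonpos)
end

section
/- (Excess Lemma) Let X̃ be a proper metric space, G a group acting on X̃ by isometries, properly discontinuously (so that the infima defining D are attained), and D(x,y) = inf_{g ∈ G} dist x (g • y). Let α̃ : [0,∞) → X̃ be a ray such that Δ := lim_{t→∞} (t − D(α̃ 0, α̃ t)) is finite. Then Δ = sup_{g ∈ G} B_{α̃}(α̃ 0, g • α̃ 0), where B_{α̃}(x,y) = lim_{t→∞} (dist x (α̃ t) − dist (α̃ t) y) is the Busemann function of the ray α̃ (which exists). -/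
/-!
Along the ray, `t - dist (α t) y` increases to the Busemann value `B (α 0) y`. Since the action
is isometric, `t - dist (α 0) (g • α t) = t - dist (α t) (g⁻¹ • α 0)`, so the quantity whose limit
is `Δ`, namely `t - D (α 0) (α t) = sup_g (t - dist (α t) (g • α 0))`, is at every time bounded
above by `sup_g B (α 0) (g • α 0)` and in the limit bounded below by each `B (α 0) (g • α 0)`.
-/

open Filter Topology

section Ray

variable {X : Type*} [PseudoMetricSpace X] {α : ℝ → X}

lemma dist_ray_zero (hray : ∀ s t : ℝ, 0 ≤ s → 0 ≤ t → dist (α s) (α t) = |s - t|)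
    {t : ℝ} (ht : 0 ≤ t) : dist (α 0) (α t) = t := by
  rw [hray 0 t le_rfl ht, zero_sub, abs_neg, abs_of_nonneg ht]

lemma sub_dist_ray_le_busemann (hray : ∀ s t : ℝ, 0 ≤ s → 0 ≤ t → dist (α s) (α t) = |s - t|)
    {y : X} {b : ℝ} (hB : Tendsto (fun s : ℝ => dist (α 0) (α s) - dist (α s) y) atTop (𝓝 b))
    {t : ℝ} (ht : 0 ≤ t) : t - dist (α t) y ≤ b := by
  refine ge_of_tendsto hB ?_
  filter_upwards [eventually_ge_atTop t] with s hts
  have hs : 0 ≤ s := ht.trans hts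
  have hst : dist (α s) (α t) = s - t := by rw [hray s t hs ht, abs_of_nonneg (sub_nonneg.2 hts)]
  linarith [dist_ray_zero hray hs, dist_triangle (α s) (α t) y]

end Ray

section IsometricAction

variable {X : Type*} [PseudoMetricSpace X] {G : Type*} [Group G] [MulAction G X]
  [IsIsometricSMul G X]

lemma dist_smul_eq_dist_inv_smul (x y : X) (g : G) : dist x (g • y) = dist y (g⁻¹ • x) := by
  rw [← dist_smul g⁻¹, inv_smul_smul, dist_comm]

lemma iInf_dist_smul_le (x y : X) (g : G) : ⨅ h : G, dist x (h • y) ≤ dist y (g • x) := by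
  refine (ciInf_le ⟨0, ?_⟩ g⁻¹).trans_eq ?_
  · rintro _ ⟨h, rfl⟩
    exact dist_nonneg
  · rw [dist_smul_eq_dist_inv_smul, inv_inv]

end IsometricAction

theorem excess_lemma_general {X : Type*} [MetricSpace X] {G : Type*} [Group G]
    [MulAction G X] (hiso : ∀ g : G, Isometry (fun x : X => g • x))
    (α : ℝ → X)
    (hray : ∀ s t : ℝ, 0 ≤ s → 0 ≤ t → dist (α s) (α t) = |s - t|)
    (Δ : ℝ)
    (hΔ : Tendsto (fun t : ℝ => t - ⨅ g : G, dist (α 0) (g • α t)) atTop (nhds Δ))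
    (B : X → X → ℝ)
    (hB : ∀ x y : X, Tendsto (fun t : ℝ => dist x (α t) - dist (α t) y)
      atTop (nhds (B x y))) :
    IsLUB (Set.range fun g : G => B (α 0) (g • α 0)) Δ := by
  have : IsIsometricSMul G X := ⟨hiso⟩
  refine ⟨?_, fun b hb => ?_⟩
  · rintro _ ⟨g, rfl⟩
    refine le_of_tendsto_of_tendsto (hB _ _) hΔ ?_
    filter_upwards [eventually_ge_atTop 0] with t ht
    rw [dist_ray_zero hray ht]
    linarith [iInf_dist_smul_le (α 0) (α t) g]
  · refine le_of_tendsto hΔ (eventually_atTop.2 ⟨0, fun t ht => ?_⟩)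
    rw [sub_le_comm]
    refine le_ciInf fun g => ?_
    rw [dist_smul_eq_dist_inv_smul, sub_le_comm]
    exact (sub_dist_ray_le_busemann hray (hB _ _) ht).trans (hb ⟨g⁻¹, rfl⟩)

/-- **Excess Lemma.** Let `G` act by isometries, properly discontinuously,
on a proper metric space `X̃`, with quotient pseudo-distance
`D x y = inf_{g ∈ G} dist x (g • y)`. If `α̃` is a ray of `X̃` such that the excess
`Δ = lim_{t→∞} (t − D(α̃ 0, α̃ t))` of its projection is finite, then
`Δ = sup_{g ∈ G} B_{α̃}(α̃ 0, g • α̃ 0)`, where `B_{α̃}` is the Busemann function of `α̃`. -/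
theorem excess_lemma {X : Type*} [MetricSpace X] [ProperSpace X] {G : Type*} [Group G]
    [MulAction G X] (hiso : ∀ g : G, Isometry (fun x : X => g • x))
    [ProperlyDiscontinuousSMul G X]
    (α : ℝ → X)
    (hray : ∀ s t : ℝ, 0 ≤ s → 0 ≤ t → dist (α s) (α t) = |s - t|)
    (Δ : ℝ)
    (hΔ : Tendsto (fun t : ℝ => t - ⨅ g : G, dist (α 0) (g • α t)) atTop (nhds Δ))
    (B : X → X → ℝ)
    (hB : ∀ x y : X, Tendsto (fun t : ℝ => dist x (α t) - dist (α t) y)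
      atTop (nhds (B x y))) :
    IsLUB (Set.range fun g : G => B (α 0) (g • α 0)) Δ :=
  excess_lemma_general hiso α hray Δ hΔ B hB
end

section
/- Let X̃ be a proper metric space, G a group acting on X̃ by isometries, properly discontinuously, and D(x,y) = inf_{g ∈ G} dist x (g • y). Let α̃ : [0,∞) → X̃ be a ray such that Δ := lim_{t→∞} (t − D(α̃ 0, α̃ t)) is finite. Then for every y ∈ X̃ the limit lim_{t→∞} (D(α̃ 0, α̃ t) − D(α̃ t, y)) exists and equals sup_{g ∈ G} B_{α̃}(α̃ 0, g • y) − Δ, where B_{α̃} is the Busemann function of the ray α̃ in X̃. (That is, the Busemann function of the projected quasi-ray in the quotient equals the supremum over the group orbit of the Busemann function of the lift, minus the excess.) -/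
open Filter

/-- Let `G` act by isometries, properly discontinuously, on a proper
metric space `X̃`, with quotient pseudo-distance `D x y = inf_{g ∈ G} dist x (g • y)`.
Let `α̃` be a ray of `X̃` whose projection has finite excess
`Δ = lim_{t→∞} (t − D(α̃ 0, α̃ t))`. Then for every `y` the limit
`lim_{t→∞} (D(α̃ 0, α̃ t) − D(α̃ t, y))` exists and equals
`sup_{g ∈ G} B_{α̃}(α̃ 0, g • y) − Δ`. -/
theorem busemann_of_projection {X : Type*} [MetricSpace X] [ProperSpace X] {G : Type*}
    [Group G] [MulAction G X] (hiso : ∀ g : G, Isometry (fun x : X => g • x))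
    [ProperlyDiscontinuousSMul G X]
    (α : ℝ → X)
    (hray : ∀ s t : ℝ, 0 ≤ s → 0 ≤ t → dist (α s) (α t) = |s - t|)
    (Δ : ℝ)
    (hΔ : Tendsto (fun t : ℝ => t - ⨅ g : G, dist (α 0) (g • α t)) atTop (nhds Δ))
    (B : X → X → ℝ)
    (hB : ∀ x y : X, Tendsto (fun t : ℝ => dist x (α t) - dist (α t) y)
      atTop (nhds (B x y))) :
    ∀ y : X, ∃ S : ℝ, IsLUB (Set.range fun g : G => B (α 0) (g • y)) S ∧
      Tendsto
        (fun t : ℝ => (⨅ g : G, dist (α 0) (g • α t)) - ⨅ g : G, dist (α t) (g • y))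
        atTop (nhds (S - Δ)) := by
  intro y
  haveI : Nonempty G := ⟨1⟩
  set D0 : ℝ → ℝ := fun t => ⨅ g : G, dist (α 0) (g • α t) with hD0def
  set Dy : ℝ → ℝ := fun t => ⨅ g : G, dist (α t) (g • y) with hDydef
  have bdd0 : ∀ t : ℝ, BddBelow (Set.range fun g : G => dist (α 0) (g • α t)) := by
    rintro t
    exact ⟨0, by rintro x ⟨g, rfl⟩; exact dist_nonneg⟩
  have bddy : ∀ t : ℝ, BddBelow (Set.range fun g : G => dist (α t) (g • y)) := by
    rintro t
    exact ⟨0, by rintro x ⟨g, rfl⟩; exact dist_nonneg⟩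
  have hdist : ∀ t : ℝ, 0 ≤ t → dist (α 0) (α t) = t := by
    intro t ht
    rw [hray 0 t le_rfl ht, zero_sub, abs_neg, abs_of_nonneg ht]
  -- `t - dist (α t) z` tends to the Busemann function
  have hBz : ∀ z : X, Tendsto (fun t : ℝ => t - dist (α t) z) atTop (nhds (B (α 0) z)) := by
    intro z
    refine (hB (α 0) z).congr' ?_
    filter_upwards [eventually_ge_atTop (0 : ℝ)] with t ht
    rw [hdist t ht]
  -- monotonicity of `t - dist (α t) z`
  have hmono : ∀ z : X, ∀ s t : ℝ, 0 ≤ s → s ≤ t →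
      s - dist (α s) z ≤ t - dist (α t) z := by
    intro z s t hs hst
    have h1 : dist (α t) z ≤ dist (α t) (α s) + dist (α s) z := dist_triangle _ _ _
    have h2 : dist (α t) (α s) = t - s := by
      rw [hray t s (hs.trans hst) hs, abs_of_nonneg (by linarith)]
    linarith
  -- hence `t - dist (α t) z ≤ B (α 0) z` for `t ≥ 0`
  have hle : ∀ z : X, ∀ t : ℝ, 0 ≤ t → t - dist (α t) z ≤ B (α 0) z := by
    intro z t ht
    refine ge_of_tendsto (hBz z) ?_
    filter_upwards [eventually_ge_atTop t] with s hs
    exact hmono z t s ht hs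
  -- isometry fact: dist (α t) (g • y) = dist (g⁻¹ • α t) y
  have hisoeq : ∀ (g : G) (a b : X), dist (g⁻¹ • a) b = dist a (g • b) := by
    intro g a b
    simpa [inv_smul_smul] using (hiso g⁻¹).dist_eq a (g • b)
  -- upper bound for the Busemann values over the orbit
  have hub : ∀ g : G, B (α 0) (g • y) ≤ Δ + dist (α 0) y := by
    intro g
    refine le_of_tendsto_of_tendsto' (hBz (g • y)) (hΔ.add_const (dist (α 0) y)) ?_
    intro t
    have h1 : D0 t ≤ dist (α 0) (g⁻¹ • α t) := ciInf_le (bdd0 t) g⁻¹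
    have h2 : dist (α 0) (g⁻¹ • α t) ≤ dist (α 0) y + dist y (g⁻¹ • α t) :=
      dist_triangle _ _ _
    have h3 : dist y (g⁻¹ • α t) = dist (α t) (g • y) := by
      rw [dist_comm, hisoeq g (α t) y]
    linarith
  -- the supremum
  set S : ℝ := sSup (Set.range fun g : G => B (α 0) (g • y)) with hSdef
  have hne : (Set.range fun g : G => B (α 0) (g • y)).Nonempty := ⟨_, ⟨1, rfl⟩⟩
  have hbddS : BddAbove (Set.range fun g : G => B (α 0) (g • y)) := by
    refine ⟨Δ + dist (α 0) y, ?_⟩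
    rintro x ⟨g, rfl⟩
    exact hub g
  have hlub : IsLUB (Set.range fun g : G => B (α 0) (g • y)) S := isLUB_csSup hne hbddS
  -- main convergence: t - Dy t → S
  have hT : Tendsto (fun t : ℝ => t - Dy t) atTop (nhds S) := by
    rw [tendsto_order]
    constructor
    · intro a ha
      obtain ⟨x, ⟨g, rfl⟩, hx⟩ := exists_lt_of_lt_csSup hne ha
      have h1 : ∀ᶠ t : ℝ in atTop, a < t - dist (α t) (g • y) :=
        (hBz (g • y)).eventually_const_lt hx
      filter_upwards [h1] with t ht
      have h2 : Dy t ≤ dist (α t) (g • y) := ciInf_le (bddy t) g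
      linarith
    · intro a ha
      filter_upwards [eventually_ge_atTop (0 : ℝ)] with t ht
      have h1 : t - S ≤ Dy t := by
        refine le_ciInf fun g => ?_
        have h2 : t - dist (α t) (g • y) ≤ B (α 0) (g • y) := hle (g • y) t ht
        have h3 : B (α 0) (g • y) ≤ S := hlub.1 ⟨g, rfl⟩
        linarith
      linarith
  refine ⟨S, hlub, ?_⟩
  have := hT.sub hΔ
  refine this.congr fun t => ?_
  ring
end

section
/- Let ℍ be the hyperbolic plane. If α, β : [0,∞) → ℍ are rays with α 0 = β 0 and B_α = B_β, then α = β. Consequently, the Busemann map on rays with fixed origin is injective. -/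
open Filter UpperHalfPlane

private lemma cosh_dist_formula (u p : ℍ) :
    Real.cosh (dist u p) =
      ((u.re - p.re) ^ 2 + u.im ^ 2 + p.im ^ 2) / (2 * u.im * p.im) := by
  have hu := u.im_pos
  have hp := p.im_pos
  rw [UpperHalfPlane.cosh_dist, Complex.dist_eq_re_im,
    Real.sq_sqrt (by positivity)]
  simp only [UpperHalfPlane.coe_re, UpperHalfPlane.coe_im]
  field_simp
  ring

set_option maxHeartbeats 1600000 in
/-- Hyperbolic Apollonius identity: for any `p q : ℍ` there is a "midpoint" `m`
and a constant `c ≥ 1` (with `c = 1` iff `p = q`) such that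
`cosh (dist u p) + cosh (dist u q) = 2 c cosh (dist u m)` for all `u`. -/
private lemma apollonius (p q : ℍ) :
    ∃ (m : ℍ) (c : ℝ), 1 ≤ c ∧ (c ≤ 1 → p = q) ∧
      ∀ u : ℍ, Real.cosh (dist u p) + Real.cosh (dist u q)
        = 2 * c * Real.cosh (dist u m) := by
  have hp := p.im_pos
  have hq := q.im_pos
  set S : ℝ := (p.re - q.re) ^ 2 + (p.im + q.im) ^ 2 with hS
  have hS4 : 4 * (p.im * q.im) ≤ S := by nlinarith [sq_nonneg (p.im - q.im)]
  have hSpos : 0 < S := by nlinarith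
  set m2 : ℝ := Real.sqrt (p.im * q.im * S) / (p.im + q.im) with hm2
  have hm2pos : 0 < m2 :=
    div_pos (Real.sqrt_pos.2 (by positivity)) (by positivity)
  set m1 : ℝ := (p.re * q.im + q.re * p.im) / (p.im + q.im) with hm1
  set c : ℝ := m2 * (p.im + q.im) / (2 * (p.im * q.im)) with hc
  have hcpos : 0 < c := by positivity
  have hm2sq : m2 ^ 2 = p.im * q.im * S / (p.im + q.im) ^ 2 := by
    rw [hm2, div_pow, Real.sq_sqrt (by positivity)]
  have hc2 : c ^ 2 = S / (4 * (p.im * q.im)) := by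
    rw [hc, div_pow, mul_pow, hm2sq]
    field_simp
    ring
  have h1c2 : 1 ≤ c ^ 2 := by
    rw [hc2, le_div_iff₀ (by positivity)]
    linarith
  have hc1 : 1 ≤ c := by nlinarith
  refine ⟨UpperHalfPlane.mk ⟨m1, m2⟩ hm2pos, c, hc1, ?_, ?_⟩
  · intro hcle
    have hceq : c = 1 := le_antisymm hcle hc1
    have hSeq : S = 4 * (p.im * q.im) := by
      have : c ^ 2 = 1 := by rw [hceq]; norm_num
      rw [hc2] at this
      field_simp at this
      linarith
    have h0 : (p.re - q.re) ^ 2 + (p.im - q.im) ^ 2 = 0 := by nlinarith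
    have hre : p.re = q.re := by nlinarith [sq_nonneg (p.re - q.re), sq_nonneg (p.im - q.im)]
    have him : p.im = q.im := by nlinarith [sq_nonneg (p.re - q.re), sq_nonneg (p.im - q.im)]
    exact UpperHalfPlane.ext' hre him
  · intro u
    have hu := u.im_pos
    have hmre : (UpperHalfPlane.mk ⟨m1, m2⟩ hm2pos).re = m1 := rfl
    have hmim : (UpperHalfPlane.mk ⟨m1, m2⟩ hm2pos).im = m2 := rfl
    rw [cosh_dist_formula u p, cosh_dist_formula u q, cosh_dist_formula,
      hmre, hmim]
    have hrhs : 2 * c * (((u.re - m1) ^ 2 + u.im ^ 2 + m2 ^ 2) / (2 * u.im * m2))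
        = (p.im + q.im) * ((u.re - m1) ^ 2 + u.im ^ 2 + m2 ^ 2)
          / (2 * (p.im * q.im) * u.im) := by
      rw [hc]
      field_simp
    rw [hrhs, hm2sq, hm1, hS]
    field_simp
    ring

/-- Two rays of the hyperbolic plane with the same origin and the same
Busemann function coincide; hence the Busemann map on rays with fixed origin is injective. -/
theorem busemann_injective_on_rays_from_origin (α β : ℝ → ℍ)
    (hα : ∀ s t : ℝ, 0 ≤ s → 0 ≤ t → dist (α s) (α t) = |s - t|)
    (hβ : ∀ s t : ℝ, 0 ≤ s → 0 ≤ t → dist (β s) (β t) = |s - t|)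
    (horig : α 0 = β 0)
    (Bα Bβ : ℍ → ℍ → ℝ)
    (hBα : ∀ x y : ℍ, Tendsto (fun t : ℝ => dist x (α t) - dist (α t) y)
      atTop (nhds (Bα x y)))
    (hBβ : ∀ x y : ℍ, Tendsto (fun t : ℝ => dist x (β t) - dist (β t) y)
      atTop (nhds (Bβ x y)))
    (heq : ∀ x y : ℍ, Bα x y = Bβ x y) :
    ∀ t : ℝ, 0 ≤ t → α t = β t := by
  intro t ht
  set p := α t with hp'
  set q := β t with hq'
  -- distances from the common origin
  have hap : dist (α 0) p = t := by
    rw [hα 0 t le_rfl ht, zero_sub, abs_neg, abs_of_nonneg ht]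
  have haq : dist (α 0) q = t := by
    rw [horig, hβ 0 t le_rfl ht, zero_sub, abs_neg, abs_of_nonneg ht]
  -- the Busemann value Bα p (α 0) = -t
  have hBαval : Bα p (α 0) = -t := by
    have h1 := hBα p (α 0)
    have h2 : (fun s : ℝ => dist p (α s) - dist (α s) (α 0)) =ᶠ[atTop]
        fun _ => -t := by
      filter_upwards [eventually_ge_atTop t, eventually_ge_atTop (0 : ℝ)] with s hs hs0
      rw [hp', hα t s ht hs0, hα s 0 hs0 le_rfl, sub_zero,
        abs_of_nonpos (by linarith), abs_of_nonneg hs0]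
      ring
    exact tendsto_nhds_unique (h1.congr' h2) tendsto_const_nhds
  have hBβval : Bβ p (β 0) = -t := by
    have h := (heq p (β 0)).symm
    rw [h, ← horig, hBαval]
  -- main limit: dist p (β s) - s → -t
  have hlim : Tendsto (fun s : ℝ => dist p (β s) - s) atTop (nhds (-t)) := by
    have h1 := hBβ p (β 0)
    rw [hBβval] at h1
    refine h1.congr' ?_
    filter_upwards [eventually_ge_atTop (0 : ℝ)] with s hs0
    rw [hβ s 0 hs0 le_rfl, sub_zero, abs_of_nonneg hs0]
  obtain ⟨m, c, hc1, hceq, hApol⟩ := apollonius p q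
  have hcpos : (0 : ℝ) < c := lt_of_lt_of_le one_pos hc1
  set u := dist (α 0) m with hu'
  have hu0 : (0 : ℝ) ≤ u := dist_nonneg
  -- cosh u ≤ cosh t, hence u ≤ t
  have hcoshu : 2 * c * Real.cosh u = 2 * Real.cosh t := by
    have h := hApol (α 0)
    rw [hap, haq] at h
    linarith
  have hut : u ≤ t := by
    have h1 : Real.cosh u ≤ Real.cosh t := by
      nlinarith [Real.cosh_pos u]
    have h2 := Real.cosh_le_cosh.1 h1
    rwa [abs_of_nonneg hu0, abs_of_nonneg ht] at h2
  -- auxiliary limit: exp (-s) * cosh (s - a) → exp (-a) / 2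
  have lim1 : ∀ a : ℝ, Tendsto (fun s : ℝ => Real.exp (-s) * Real.cosh (s - a))
      atTop (nhds (Real.exp (-a) / 2)) := by
    intro a
    have heqfun : ∀ s : ℝ, Real.exp (-s) * Real.cosh (s - a)
        = (Real.exp (-a) + Real.exp (a - 2 * s)) / 2 := by
      intro s
      have h1 : Real.exp (-s) * Real.exp (s - a) = Real.exp (-a) := by
        rw [← Real.exp_add]; congr 1; ring
      have h2 : Real.exp (-s) * Real.exp (-(s - a)) = Real.exp (a - 2 * s) := by
        rw [← Real.exp_add]; congr 1; ring
      rw [Real.cosh_eq, ← mul_div_assoc, mul_add, h1, h2]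
    have h2 : Tendsto (fun s : ℝ => Real.exp (a - 2 * s)) atTop (nhds 0) := by
      have hcmp : Tendsto (fun s : ℝ => a - 2 * s) atTop atBot := by
        have h2 : Tendsto (fun s : ℝ => 2 * s) atTop atTop :=
          tendsto_id.const_mul_atTop (show (0:ℝ) < 2 by norm_num)
        have h3 := tendsto_neg_atTop_atBot.comp h2
        simpa [sub_eq_add_neg, Function.comp] using
          tendsto_atBot_add_const_left atTop a h3
      exact Real.tendsto_exp_atBot.comp hcmp
    have h3 : Tendsto (fun s : ℝ => (Real.exp (-a) + Real.exp (a - 2 * s)) / 2)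
        atTop (nhds ((Real.exp (-a) + 0) / 2)) :=
      (tendsto_const_nhds.add h2).div_const 2
    rw [add_zero] at h3
    exact h3.congr fun s => (heqfun s).symm
  -- limit of exp (-s) * cosh (dist p (β s))
  have hterm : Tendsto (fun s : ℝ => Real.exp (-s) * Real.cosh (dist p (β s)))
      atTop (nhds (Real.exp (-t) / 2)) := by
    have heqfun : ∀ s : ℝ, Real.exp (-s) * Real.cosh (dist p (β s))
        = (Real.exp (dist p (β s) - s) + Real.exp (-(dist p (β s)) - s)) / 2 := by
      intro s
      have h1 : Real.exp (-s) * Real.exp (dist p (β s)) = Real.exp (dist p (β s) - s) := by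
        rw [← Real.exp_add]; congr 1; ring
      have h2 : Real.exp (-s) * Real.exp (-(dist p (β s))) = Real.exp (-(dist p (β s)) - s) := by
        rw [← Real.exp_add]; congr 1; ring
      rw [Real.cosh_eq, ← mul_div_assoc, mul_add, h1, h2]
    have h1 : Tendsto (fun s : ℝ => Real.exp (dist p (β s) - s)) atTop
        (nhds (Real.exp (-t))) :=
      (Real.continuous_exp.tendsto (-t)).comp hlim
    have h2 : Tendsto (fun s : ℝ => Real.exp (-(dist p (β s)) - s)) atTop (nhds 0) := by
      apply squeeze_zero (fun s => (Real.exp_pos _).le)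
        (fun s => ?_) Real.tendsto_exp_neg_atTop_nhds_zero
      exact Real.exp_le_exp.2 (by linarith [dist_nonneg (x := p) (y := β s)])
    have h3 := (h1.add h2).div_const 2
    rw [add_zero] at h3
    exact h3.congr fun s => (heqfun s).symm
  -- the eventual inequality
  have hineq : ∀ᶠ s : ℝ in atTop,
      Real.exp (-s) * (2 * c * Real.cosh (s - u))
        ≤ Real.exp (-s) * (Real.cosh (dist p (β s)) + Real.cosh (s - t)) := by
    filter_upwards [eventually_ge_atTop t, eventually_ge_atTop u,
      eventually_ge_atTop (0 : ℝ)] with s hst hsu hs0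
    have hdistaβ : dist (α 0) (β s) = s := by
      rw [horig, hβ 0 s le_rfl hs0, zero_sub, abs_neg, abs_of_nonneg hs0]
    have hdistm : s - u ≤ dist m (β s) := by
      have htri := dist_triangle (α 0) m (β s)
      rw [hdistaβ] at htri
      linarith
    have hcosh1 : Real.cosh (s - u) ≤ Real.cosh (dist m (β s)) := by
      apply Real.cosh_le_cosh.2
      rw [abs_of_nonneg (by linarith), abs_of_nonneg dist_nonneg]
      exact hdistm
    have hApols := hApol (β s)
    have hqdist : dist (β s) q = s - t := by
      rw [hq', hβ s t hs0 ht, abs_of_nonneg (by linarith)]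
    rw [hqdist, dist_comm (β s) p] at hApols
    have hmul : 2 * c * Real.cosh (s - u) ≤ 2 * c * Real.cosh (dist m (β s)) := by
      apply mul_le_mul_of_nonneg_left hcosh1 (by positivity)
    rw [dist_comm (β s) m] at hApols
    have : 2 * c * Real.cosh (s - u)
        ≤ Real.cosh (dist p (β s)) + Real.cosh (s - t) := by
      rw [← hApols] at hmul
      linarith
    exact mul_le_mul_of_nonneg_left this (Real.exp_pos _).le
  -- take limits
  have hL : Tendsto (fun s : ℝ => Real.exp (-s) * (2 * c * Real.cosh (s - u)))
      atTop (nhds (2 * c * (Real.exp (-u) / 2))) := by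
    have := (lim1 u).const_mul (2 * c)
    refine this.congr fun s => by ring
  have hR : Tendsto (fun s : ℝ =>
      Real.exp (-s) * (Real.cosh (dist p (β s)) + Real.cosh (s - t)))
      atTop (nhds (Real.exp (-t) / 2 + Real.exp (-t) / 2)) := by
    have := hterm.add (lim1 t)
    refine this.congr fun s => by ring
  have hfinal : 2 * c * (Real.exp (-u) / 2) ≤ Real.exp (-t) / 2 + Real.exp (-t) / 2 :=
    le_of_tendsto_of_tendsto hL hR hineq
  have hcle : c ≤ 1 := by
    have he1 : Real.exp (-t) ≤ Real.exp (-u) := Real.exp_le_exp.2 (by linarith)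
    have he2 : (0 : ℝ) < Real.exp (-u) := Real.exp_pos _
    nlinarith
  exact hceq hcle
end

section
/- (Continuity of the Busemann map for ℍ) Let ℍ be the hyperbolic plane and α_n, α : [0,∞) → ℍ rays with α_n → α uniformly on compact subsets of [0,∞). Then B_{α_n}(x,y) → B_α(x,y) for all x, y ∈ ℍ, uniformly on compact subsets of ℍ × ℍ. -/
/-!
In the hyperboloid model `cosh (dist x ·)` is the restriction of a linear functional, and a
point `m` of a geodesic segment `[p, q]` is the combination
`(sinh d(m,q) • p + sinh d(p,m) • q) / sinh d(p,q)`. This gives Stewart's relation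
`cosh d(x, α s) sinh 1 = cosh d(x, α 1) sinh s - cosh d(x, α 0) sinh (s - 1)` along a ray, and
letting `s → ∞` yields the closed form `B_α(x, y) = log E(x) - log E(y)` with
`E(x) = (cosh d(x, α 1) - e⁻¹ cosh d(x, α 0)) / sinh 1`. This expression is jointly continuous
in `(α 0, α 1)` and `(x, y)` on pairs at distance `1`, so convergence of `αₙ 0` and `αₙ 1` alone
forces uniform convergence on compact sets.
-/

open Filter UpperHalfPlane
open Real Topology

lemma tendstoUniformlyOn_of_continuousOn_prod {ι α β E : Type*} [TopologicalSpace α]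
    [TopologicalSpace β] [UniformSpace E] {f : α → β → E} {s : Set α} {k : Set β} {q : α}
    {l : Filter ι} {a : ι → α} (hk : IsCompact k)
    (hf : ContinuousOn (Function.uncurry f) (s ×ˢ k)) (hq : q ∈ s) (ha : Tendsto a l (𝓝[s] q)) :
    TendstoUniformlyOn (fun i => f (a i)) (f q) l k := by
  intro u hu
  obtain ⟨v, hv, hvu⟩ := hk.mem_uniformity_of_prod hf hq (symm_le_uniformity hu)
  filter_upwards [ha hv] with i hi x hx using hvu _ hi x hx

def minkowski : LinearMap.BilinForm ℝ (ℝ × ℝ × ℝ) :=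
  LinearMap.mk₂ ℝ (fun u v => u.1 * v.1 - u.2.1 * v.2.1 - u.2.2 * v.2.2)
    (fun _ _ _ => by simp only [Prod.fst_add, Prod.snd_add]; ring)
    (fun _ _ _ => by simp only [Prod.smul_fst, Prod.smul_snd, smul_eq_mul]; ring)
    (fun _ _ _ => by simp only [Prod.fst_add, Prod.snd_add]; ring)
    (fun _ _ _ => by simp only [Prod.smul_fst, Prod.smul_snd, smul_eq_mul]; ring)

lemma minkowski_apply (u v : ℝ × ℝ × ℝ) :
    minkowski u v = u.1 * v.1 - u.2.1 * v.2.1 - u.2.2 * v.2.2 := rfl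

lemma eq_zero_of_minkowski_eq_zero {u v : ℝ × ℝ × ℝ} (hu : 0 < minkowski u u)
    (huv : minkowski u v = 0) (hv : minkowski v v = 0) : v = 0 := by
  obtain ⟨t, a, b⟩ := u
  obtain ⟨v₀, v₁, v₂⟩ := v
  simp only [minkowski_apply] at hu huv hv
  have hcs : (t * t - a * a - b * b) * v₀ ^ 2 + (a * v₂ - b * v₁) ^ 2 = 0 := by
    linear_combination (t * v₀ + a * v₁ + b * v₂) * huv - (a * a + b * b) * hv
  have h₀ : v₀ = 0 := by
    have : (t * t - a * a - b * b) * v₀ ^ 2 = 0 := by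
      nlinarith [sq_nonneg (a * v₂ - b * v₁), mul_nonneg hu.le (sq_nonneg v₀)]
    simpa [hu.ne'] using this
  have h₁ : v₁ = 0 := by nlinarith
  have h₂ : v₂ = 0 := by nlinarith
  simp [h₀, h₁, h₂]

namespace UpperHalfPlane

noncomputable def toHyperboloid (z : ℍ) : ℝ × ℝ × ℝ :=
  ((1 + z.re ^ 2 + z.im ^ 2) / (2 * z.im), (1 - z.re ^ 2 - z.im ^ 2) / (2 * z.im), z.re / z.im)

lemma minkowski_toHyperboloid (z w : ℍ) :
    minkowski (toHyperboloid z) (toHyperboloid w) = cosh (dist z w) := by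
  have := z.im_pos.ne'
  have := w.im_pos.ne'
  rw [cosh_dist', minkowski_apply, toHyperboloid, toHyperboloid]
  field_simp
  ring

theorem cosh_dist_mul_sinh_dist_of_dist_add_dist_eq {p m q : ℍ}
    (h : dist p m + dist m q = dist p q) (x : ℍ) :
    cosh (dist x m) * sinh (dist p q) =
      cosh (dist x p) * sinh (dist m q) + cosh (dist x q) * sinh (dist p m) := by
  -- `V` is orthogonal to the images of `p`, `q`, `m`, hence isotropic, and orthogonal to a
  -- timelike vector, so it vanishes.
  set V := sinh (dist p q) • toHyperboloid m - sinh (dist m q) • toHyperboloid p -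
    sinh (dist p m) • toHyperboloid q
  have hV : ∀ w, minkowski (toHyperboloid w) V = cosh (dist w m) * sinh (dist p q) -
      cosh (dist w p) * sinh (dist m q) - cosh (dist w q) * sinh (dist p m) := fun w => by
    simp only [V, map_sub, map_smul, smul_eq_mul, minkowski_toHyperboloid]
    ring
  have hpq : dist p q = dist p m + dist m q := h.symm
  have hVp : minkowski (toHyperboloid p) V = 0 := by
    rw [hV, dist_self, cosh_zero, hpq, sinh_add, cosh_add]
    linear_combination sinh (dist m q) * cosh_sq (dist p m)
  have hVq : minkowski (toHyperboloid q) V = 0 := by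
    rw [hV, dist_self, cosh_zero, dist_comm q m, dist_comm q p, hpq, sinh_add, cosh_add]
    linear_combination sinh (dist p m) * cosh_sq (dist m q)
  have hVm : minkowski (toHyperboloid m) V = 0 := by
    rw [hV, dist_self, cosh_zero, dist_comm m p, hpq, sinh_add]
    ring
  have hVV : minkowski V V = 0 := by
    have hlin : ∀ w, minkowski V w = sinh (dist p q) * minkowski (toHyperboloid m) w -
        sinh (dist m q) * minkowski (toHyperboloid p) w -
        sinh (dist p m) * minkowski (toHyperboloid q) w := fun w => by
      simp only [V, map_sub, map_smul, LinearMap.sub_apply, LinearMap.smul_apply, smul_eq_mul]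
    rw [hlin, hVp, hVq, hVm]
    ring
  have hV0 : V = 0 := eq_zero_of_minkowski_eq_zero
    (by rw [minkowski_toHyperboloid, dist_self, cosh_zero]; exact one_pos) hVp hVV
  have hx := hV x
  rw [hV0, map_zero] at hx
  linarith

end UpperHalfPlane

def IsGeodesicRay {X : Type*} [PseudoMetricSpace X] (α : ℝ → X) : Prop :=
  ∀ s t : ℝ, 0 ≤ s → 0 ≤ t → dist (α s) (α t) = |s - t|

namespace IsGeodesicRay

section PseudoMetricSpace

variable {X : Type*} [PseudoMetricSpace X] {α : ℝ → X}

lemma dist_eq_sub (hα : IsGeodesicRay α) {s t : ℝ} (hs : 0 ≤ s) (hst : s ≤ t) :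
    dist (α s) (α t) = t - s := by
  rw [hα s t hs (hs.trans hst), abs_sub_comm, abs_of_nonneg (sub_nonneg.2 hst)]

lemma dist_zero_one (hα : IsGeodesicRay α) : dist (α 0) (α 1) = 1 := by
  simpa using hα.dist_eq_sub le_rfl zero_le_one

end PseudoMetricSpace

lemma cosh_dist_mul_sinh_one {α : ℝ → ℍ} (hα : IsGeodesicRay α) (x : ℍ) {s : ℝ} (hs : 1 ≤ s) :
    cosh (dist x (α s)) * sinh 1 =
      cosh (dist x (α 1)) * sinh s - cosh (dist x (α 0)) * sinh (s - 1) := by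
  have h01 := hα.dist_zero_one
  have h1s := hα.dist_eq_sub zero_le_one hs
  have h0s := hα.dist_eq_sub le_rfl (zero_le_one.trans hs)
  rw [sub_zero] at h0s
  have := cosh_dist_mul_sinh_dist_of_dist_add_dist_eq
    (by rw [h01, h1s, h0s]; ring : dist (α 0) (α 1) + dist (α 1) (α s) = dist (α 0) (α s)) x
  rw [h01, h1s, h0s] at this
  linarith

end IsGeodesicRay

/-- For a geodesic ray `α`, `expBusemann (α 0) (α 1) x = exp (lim (dist x (α s) - s))`. -/
noncomputable def expBusemann (a₀ a₁ x : ℍ) : ℝ :=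
  (cosh (dist x a₁) - exp (-1) * cosh (dist x a₀)) / sinh 1

lemma exp_neg_dist_le_expBusemann {a₀ a₁ : ℍ} (h : dist a₀ a₁ = 1) (x : ℍ) :
    exp (-dist x a₀) ≤ expBusemann a₀ a₁ x := by
  have hcosh : cosh (dist x a₀ - 1) ≤ cosh (dist x a₁) := by
    rw [cosh_le_cosh, abs_of_nonneg dist_nonneg, abs_le]
    constructor <;> linarith [dist_triangle a₀ x a₁, dist_triangle x a₁ a₀, dist_comm x a₀,
      dist_comm a₁ a₀]
  have hsinh : 0 < sinh 1 := sinh_pos_iff.2 one_pos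
  have hexp : cosh (dist x a₀ - 1) - exp (-1) * cosh (dist x a₀) =
      exp (-dist x a₀) * sinh 1 := by
    simp only [cosh_eq, sinh_eq, exp_sub, exp_neg]
    field_simp
    ring
  rw [expBusemann, le_div_iff₀ hsinh]
  linarith

lemma expBusemann_pos {a₀ a₁ : ℍ} (h : dist a₀ a₁ = 1) (x : ℍ) : 0 < expBusemann a₀ a₁ x :=
  (exp_pos _).trans_le (exp_neg_dist_le_expBusemann h x)

lemma continuous_expBusemann :
    Continuous fun q : ℍ × ℍ × ℍ => expBusemann q.1 q.2.1 q.2.2 := by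
  unfold expBusemann
  fun_prop

noncomputable def rayBusemann (a : ℍ × ℍ) (p : ℍ × ℍ) : ℝ :=
  log (expBusemann a.1 a.2 p.1) - log (expBusemann a.1 a.2 p.2)

lemma continuousOn_rayBusemann :
    ContinuousOn (Function.uncurry rayBusemann) ({a | dist a.1 a.2 = 1} ×ˢ Set.univ) := by
  have hlog : ∀ f : (ℍ × ℍ) × (ℍ × ℍ) → ℍ, Continuous f →
      ContinuousOn (fun q => log (expBusemann q.1.1 q.1.2 (f q)))
        ({a | dist a.1 a.2 = 1} ×ˢ Set.univ) := fun f hf =>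
    (continuous_expBusemann.comp (by fun_prop : Continuous fun q => (q.1.1, q.1.2, f q)))
      |>.continuousOn.log fun q hq => (expBusemann_pos hq.1 _).ne'
  exact (hlog _ (by fun_prop)).sub (hlog _ (by fun_prop))

namespace IsGeodesicRay

variable {α : ℝ → ℍ}

lemma tendsto_exp_dist_sub (hα : IsGeodesicRay α) (x : ℍ) :
    Tendsto (fun s => exp (dist x (α s) - s)) atTop (𝓝 (expBusemann (α 0) (α 1) x)) := by
  let g : ℝ → ℝ := fun t => (cosh (dist x (α 1)) * (1 - t ^ 2) -
    cosh (dist x (α 0)) * (exp (-1) - exp 1 * t ^ 2)) / sinh 1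
  have hg : Tendsto (fun s => g (exp (-s))) atTop (𝓝 (expBusemann (α 0) (α 1) x)) := by
    have hg0 : g 0 = expBusemann (α 0) (α 1) x := by simp [g, expBusemann, mul_comm]
    rw [← hg0]
    exact ((by fun_prop : Continuous g).tendsto 0).comp tendsto_exp_neg_atTop_nhds_zero
  have hr : Tendsto (fun s => exp (-s - dist x (α s))) atTop (𝓝 0) :=
    tendsto_exp_atBot.comp <| tendsto_atBot_mono
      (fun s => by linarith [dist_nonneg (x := x) (y := α s)]) tendsto_neg_atTop_atBot
  -- Stewart's relation at `s`, multiplied by `2 exp (-s) / sinh 1`.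
  have heq : ∀ᶠ s in atTop,
      g (exp (-s)) - exp (-s - dist x (α s)) = exp (dist x (α s) - s) := by
    filter_upwards [eventually_ge_atTop 1] with s hs
    have hst := hα.cosh_dist_mul_sinh_one x hs
    have hsinh : 0 < sinh 1 := sinh_pos_iff.2 one_pos
    rw [cosh_eq, sinh_eq s, sinh_eq (s - 1)] at hst
    rw [div_sub' hsinh.ne', div_eq_iff hsinh.ne']
    simp only [exp_sub, exp_neg] at hst ⊢
    field_simp at hst ⊢
    linear_combination -hst
  simpa using (hg.sub hr).congr' heq

lemma tendsto_dist_sub (hα : IsGeodesicRay α) (x : ℍ) :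
    Tendsto (fun s => dist x (α s) - s) atTop (𝓝 (log (expBusemann (α 0) (α 1) x))) := by
  simpa only [log_exp] using
    (hα.tendsto_exp_dist_sub x).log (expBusemann_pos hα.dist_zero_one x).ne'

lemma busemann_eq (hα : IsGeodesicRay α) {x y : ℍ} {b : ℝ}
    (hb : Tendsto (fun t => dist x (α t) - dist (α t) y) atTop (𝓝 b)) :
    b = rayBusemann (α 0, α 1) (x, y) := by
  refine tendsto_nhds_unique hb ?_
  simpa only [rayBusemann, dist_comm y, sub_sub_sub_cancel_right] using
    (hα.tendsto_dist_sub x).sub (hα.tendsto_dist_sub y)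

end IsGeodesicRay

/-- **Continuity of the Busemann map for `ℍ`.**
If rays `α_n` of the hyperbolic plane converge to a ray `α` uniformly on compact subsets
of `[0,∞)`, then `B_{α_n}(x,y) → B_α(x,y)` for all `x, y`, uniformly on compact subsets
of `ℍ × ℍ`. -/
theorem busemann_map_continuous (αn : ℕ → ℝ → ℍ) (α : ℝ → ℍ)
    (hαn : ∀ n, ∀ s t : ℝ, 0 ≤ s → 0 ≤ t → dist (αn n s) (αn n t) = |s - t|)
    (hα : ∀ s t : ℝ, 0 ≤ s → 0 ≤ t → dist (α s) (α t) = |s - t|)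
    (hconv : ∀ T : ℝ, 0 ≤ T →
      TendstoUniformlyOn (fun n t => αn n t) α atTop (Set.Icc 0 T))
    (Bn : ℕ → ℍ → ℍ → ℝ) (B : ℍ → ℍ → ℝ)
    (hBn : ∀ n (x y : ℍ), Tendsto (fun t : ℝ => dist x (αn n t) - dist (αn n t) y)
      atTop (nhds (Bn n x y)))
    (hB : ∀ x y : ℍ, Tendsto (fun t : ℝ => dist x (α t) - dist (α t) y)
      atTop (nhds (B x y))) :
    (∀ x y : ℍ, Tendsto (fun n => Bn n x y) atTop (nhds (B x y))) ∧
    (∀ K : Set (ℍ × ℍ), IsCompact K →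
      TendstoUniformlyOn (fun n (p : ℍ × ℍ) => Bn n p.1 p.2)
        (fun p => B p.1 p.2) atTop K) := by
  obtain rfl : Bn = fun n x y => rayBusemann (αn n 0, αn n 1) (x, y) :=
    funext fun n => funext fun x => funext fun y => IsGeodesicRay.busemann_eq (hαn n) (hBn n x y)
  obtain rfl : B = fun x y => rayBusemann (α 0, α 1) (x, y) :=
    funext fun x => funext fun y => IsGeodesicRay.busemann_eq hα (hB x y)
  have hconv₁ : ∀ t ∈ Set.Icc (0 : ℝ) 1, Tendsto (fun n => αn n t) atTop (𝓝 (α t)) :=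
    fun t ht => (hconv 1 zero_le_one).tendsto_at ht
  have hpair : Tendsto (fun n => (αn n 0, αn n 1)) atTop
      (𝓝[{a | dist a.1 a.2 = 1}] (α 0, α 1)) :=
    tendsto_nhdsWithin_iff.2
      ⟨(hconv₁ 0 (Set.left_mem_Icc.2 zero_le_one)).prodMk_nhds
        (hconv₁ 1 (Set.right_mem_Icc.2 zero_le_one)),
      Eventually.of_forall fun n => IsGeodesicRay.dist_zero_one (hαn n)⟩
  have huniform : ∀ K : Set (ℍ × ℍ), IsCompact K → TendstoUniformlyOn
      (fun n => rayBusemann (αn n 0, αn n 1)) (rayBusemann (α 0, α 1)) atTop K := fun K hK =>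
    tendstoUniformlyOn_of_continuousOn_prod hK
      (continuousOn_rayBusemann.mono (Set.prod_mono le_rfl (Set.subset_univ K)))
      (IsGeodesicRay.dist_zero_one hα) hpair
  exact ⟨fun x y => (huniform {(x, y)} isCompact_singleton).tendsto_at rfl, huniform⟩
end

section
/- (Uniform Approximation) Let ℍ be the hyperbolic plane. For every o ∈ ℍ, r > 0 and ε > 0 there exists T ≥ 0 such that for every ray α : [0,∞) → ℍ with α 0 ∈ closedBall o r, every x, y ∈ closedBall o r and every t ≥ T, one has |B_α(x,y) − (dist x (α t) − dist (α t) y)| ≤ ε. (The Busemann function is approximated by its cocycle uniformly over all rays issuing from a fixed ball and all pairs of points in that ball.) -/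
open Filter UpperHalfPlane Metric

/-!
Along a ray `α` in `ℍ`, the function `f s = cosh (dist x (α s))` satisfies
`f s + f (s + 2) = 2 cosh 1 · f (s + 1)`: this is the hyperbolic median identity, proved by
moving the midpoint to `I`, where the two endpoints are exchanged by the half-turn `z ↦ -1/z`.
Hence a discrete maximum principle compares `f` with `A e^s + B e^{-s}` along
`t - ⌊t⌋ + ℕ`, which gives `cosh (dist x (α t)) ≤ e^{-N} cosh (dist x (α (t + N))) + O(e^{-t})`.
So the excess `dist x (α t) + N - dist x (α (t + N)) ≥ 0` is `O(e^{-2t})`, uniformly in `N` and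
in `x` near `α 0`. Between times `t` and `t + N` the cocycle changes by the difference of the
excesses of `x` and `y`, so it stays within that bound of its limit.
-/

open Real

/-- With `z = p + q i` and `w = r + s i`, the hypotheses say `dist z I = dist w I` and
`dist z w = 2 * dist z I`, and the conclusion says `w = -1 / z`. -/
theorem half_turn_of_cosh_relations {p q r s : ℝ} (hq : 0 < q)
    (h1 : q * (r ^ 2 + s ^ 2 + 1) = s * (p ^ 2 + q ^ 2 + 1))
    (h2 : q * ((p - r) ^ 2 + q ^ 2 + s ^ 2) = s * (p ^ 2 + q ^ 2 + 1) ^ 2 - 2 * q ^ 2 * s) :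
    s * (p ^ 2 + q ^ 2) = q ∧ s * p + q * r = 0 := by
  set X := q * (p ^ 2 + q ^ 2) + s * (p ^ 2 + q ^ 2) + s - q - s * (p ^ 2 + q ^ 2 + 1) ^ 2
    + 2 * q ^ 2 * s
  have hpr : 2 * q * (p * r) = X := by linear_combination h1 - h2
  have hfactor :
      (p ^ 2 + (q - 1) ^ 2) * ((p ^ 2 + (q + 1) ^ 2) * (s * (p ^ 2 + q ^ 2) - q) ^ 2) = 0 := by
    linear_combination -(X + 2 * q * (p * r)) * hpr + (4 * q * p ^ 2) * h1
  have hs : s * (p ^ 2 + q ^ 2) = q := by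
    rcases mul_eq_zero.1 hfactor with hzI | hw
    · obtain ⟨rfl, rfl⟩ : p = 0 ∧ q = 1 := by
        constructor <;> nlinarith [sq_nonneg p, sq_nonneg (q - 1)]
      nlinarith [sq_nonneg r, sq_nonneg (s - 1)]
    · have := (mul_eq_zero.1 hw).resolve_left (by positivity)
      exact sub_eq_zero.1 (pow_eq_zero_iff two_ne_zero |>.1 this)
  refine ⟨hs, pow_eq_zero_iff two_ne_zero |>.1 ?_⟩
  linear_combination s * hpr + q * h1 + (q - s * (p ^ 2 + q ^ 2)) * hs

namespace UpperHalfPlane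

theorem cosh_dist_add_cosh_dist_of_midpoint_I {x z w : ℍ} (hzI : dist z I = dist I w)
    (hzw : dist z w = dist z I + dist I w) :
    cosh (dist x z) + cosh (dist x w) = 2 * cosh (dist z I) * cosh (dist x I) := by
  have hz := z.im_pos
  have hw := w.im_pos
  have hx := x.im_pos
  have h1 := congrArg cosh hzI
  have h2 : cosh (dist z w) = 2 * cosh (dist z I) ^ 2 - 1 := by
    rw [hzw, ← hzI, ← two_mul, cosh_two_mul, sinh_sq]; ring
  simp only [cosh_dist', I_re, I_im, sub_zero, zero_sub, neg_sq] at h1 h2 ⊢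
  field_simp at h1 h2 ⊢
  obtain ⟨hs, hr⟩ := half_turn_of_cosh_relations (p := z.re) (r := w.re) (s := w.im) hz
    (by linear_combination -h1) (by linear_combination h2)
  linear_combination (1 - x.re ^ 2 - x.im ^ 2) * hs - 2 * x.re * hr - h1

theorem exists_isometry_apply_eq_I (m : ℍ) : ∃ φ : ℍ → ℍ, Isometry φ ∧ φ m = I :=
  ⟨fun u => (⟨m.im⁻¹, inv_pos.2 m.im_pos⟩ : {x : ℝ // 0 < x}) • ((-m.re) +ᵥ u),
    (isometry_pos_mul _).comp (isometry_real_vadd _), by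
      rw [UpperHalfPlane.ext_iff, Complex.ext_iff]; simp [m.im_pos.ne']⟩

theorem cosh_dist_add_cosh_dist_of_midpoint {x z w m : ℍ} (hzm : dist z m = dist m w)
    (hzw : dist z w = dist z m + dist m w) :
    cosh (dist x z) + cosh (dist x w) = 2 * cosh (dist z m) * cosh (dist x m) := by
  obtain ⟨φ, hφ, hφm⟩ := exists_isometry_apply_eq_I m
  have key := @cosh_dist_add_cosh_dist_of_midpoint_I (φ x) (φ z) (φ w)
  rw [← hφm] at key
  simp only [hφ.dist_eq] at key
  exact key hzm hzw

end UpperHalfPlane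

theorem discrete_maximum_principle {c : ℝ} (hc : 1 < c) {K : ℕ} {ψ : ℕ → ℝ}
    (h0 : ψ 0 ≤ 0) (hK : ψ K ≤ 0)
    (hψ : ∀ k, k + 2 ≤ K → 2 * c * ψ (k + 1) ≤ ψ k + ψ (k + 2)) {k : ℕ} (hk : k ≤ K) :
    ψ k ≤ 0 := by
  obtain ⟨j, hj, hmax⟩ := Finset.exists_max_image (Finset.range (K + 1)) ψ ⟨0, by simp⟩
  simp only [Finset.mem_range, Nat.lt_succ_iff] at hj hmax
  refine (hmax k hk).trans (not_lt.1 fun hpos => ?_)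
  obtain ⟨i, rfl⟩ : ∃ i, j = i + 1 :=
    Nat.exists_eq_succ_of_ne_zero (by rintro rfl; linarith)
  have hi : i + 2 ≤ K := by
    rcases hj.lt_or_eq with hlt | rfl
    · omega
    · linarith
  nlinarith [hψ i hi, hmax i (by omega), hmax (i + 2) hi]

theorem exp_comb_add_exp_comb_add_two (A B s : ℝ) :
    (A * exp s + B * exp (-s)) + (A * exp (s + 2) + B * exp (-(s + 2)))
      = 2 * cosh 1 * (A * exp (s + 1) + B * exp (-(s + 1))) := by
  rw [show s + 2 = s + 1 + 1 by ring]
  simp only [cosh_eq, neg_add, exp_add, exp_neg]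
  field_simp
  ring

def IsRay {X : Type*} [PseudoMetricSpace X] (α : ℝ → X) : Prop :=
  ∀ s t : ℝ, 0 ≤ s → 0 ≤ t → dist (α s) (α t) = |s - t|

namespace IsRay

section PseudoMetricSpace

variable {X : Type*} [PseudoMetricSpace X] {α : ℝ → X}

theorem dist_add (hα : IsRay α) {s u : ℝ} (hs : 0 ≤ s) (hu : 0 ≤ u) :
    dist (α s) (α (s + u)) = u := by
  rw [hα s (s + u) hs (by linarith), sub_add_cancel_left, abs_neg, abs_of_nonneg hu]

theorem dist_add_sub_dist_nonneg (hα : IsRay α) (x : X) {s u : ℝ} (hs : 0 ≤ s) (hu : 0 ≤ u) :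
    0 ≤ dist x (α s) + u - dist x (α (s + u)) := by
  linarith [dist_triangle x (α s) (α (s + u)), hα.dist_add hs hu]

theorem abs_busemann_sub_le (hα : IsRay α) {x y : X} {t L δ : ℝ} (ht : 0 ≤ t)
    (hL : Tendsto (fun s => dist x (α s) - dist (α s) y) atTop (nhds L))
    (hx : ∀ N : ℕ, dist x (α t) + N - dist x (α (t + N)) ≤ δ)
    (hy : ∀ N : ℕ, dist y (α t) + N - dist y (α (t + N)) ≤ δ) :
    |L - (dist x (α t) - dist (α t) y)| ≤ δ := by
  have hN (N : ℕ) :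
      |(dist x (α (t + N)) - dist (α (t + N)) y) - (dist x (α t) - dist (α t) y)| ≤ δ := by
    have hx₀ := hα.dist_add_sub_dist_nonneg x ht N.cast_nonneg
    have hy₀ := hα.dist_add_sub_dist_nonneg y ht N.cast_nonneg
    rw [abs_le, dist_comm (α t) y, dist_comm _ y]
    constructor <;> linarith [hx N, hy N]
  have hlim : Tendsto (fun N : ℕ => dist x (α (t + N)) - dist (α (t + N)) y) atTop (nhds L) :=
    hL.comp (tendsto_atTop_add_const_left atTop t tendsto_natCast_atTop_atTop)
  exact le_of_tendsto ((hlim.sub_const _).abs) (Eventually.of_forall hN)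

end PseudoMetricSpace

variable {α : ℝ → ℍ}

theorem cosh_dist_add_cosh_dist_add_two (hα : IsRay α) (x : ℍ) {s : ℝ} (hs : 0 ≤ s) :
    cosh (dist x (α s)) + cosh (dist x (α (s + 2)))
      = 2 * cosh 1 * cosh (dist x (α (s + 1))) := by
  have h01 := hα.dist_add hs zero_le_one
  have h12 := hα.dist_add (s := s + 1) (by linarith) zero_le_one
  have h02 := hα.dist_add hs zero_le_two
  rw [add_assoc, one_add_one_eq_two] at h12
  have := UpperHalfPlane.cosh_dist_add_cosh_dist_of_midpoint (x := x) (by rw [h01, h12])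
    (by rw [h01, h12, h02]; norm_num)
  rwa [h01] at this

theorem cosh_dist_le_of_le (hα : IsRay α) (x : ℍ) {s₀ A B : ℝ} (hs₀ : 0 ≤ s₀) {K : ℕ}
    (h0 : cosh (dist x (α s₀)) ≤ A * exp s₀ + B * exp (-s₀))
    (hK : cosh (dist x (α (s₀ + K))) ≤ A * exp (s₀ + K) + B * exp (-(s₀ + K)))
    {k : ℕ} (hk : k ≤ K) :
    cosh (dist x (α (s₀ + k))) ≤ A * exp (s₀ + k) + B * exp (-(s₀ + k)) := by
  have := discrete_maximum_principle (one_lt_cosh.2 one_ne_zero)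
    (ψ := fun k : ℕ => cosh (dist x (α (s₀ + k))) - (A * exp (s₀ + k) + B * exp (-(s₀ + k))))
    (by simpa using h0) (by simpa using hK) ?_ hk
  · simpa using this
  intro j _
  have hrec := hα.cosh_dist_add_cosh_dist_add_two x (s := s₀ + j) (by positivity)
  have hexp := exp_comb_add_exp_comb_add_two A B (s₀ + j)
  push_cast
  simp only [← add_assoc]
  linarith

theorem cosh_dist_le (hα : IsRay α) {x : ℍ} {c : ℝ} (hc : dist x (α 0) ≤ c) {t : ℝ}
    (ht : 0 ≤ t) (N : ℕ) :
    cosh (dist x (α t)) ≤ cosh (dist x (α (t + N))) * exp (-N) + cosh (c + 1) * exp (1 - t) := by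
  set M := ⌊t⌋₊
  set s₀ := t - M
  have hs₀ : 0 ≤ s₀ := sub_nonneg.2 (Nat.floor_le ht)
  have hs₀' : s₀ ≤ 1 := by linarith [Nat.lt_floor_add_one t]
  have hdist₀ : dist x (α s₀) ≤ c + 1 := by
    have h0s₀ := hα.dist_add le_rfl hs₀
    rw [zero_add] at h0s₀
    linarith [dist_triangle x (α 0) (α s₀)]
  have hcosh₀ : cosh (dist x (α s₀)) ≤ cosh (c + 1) := by
    rw [cosh_le_cosh, abs_of_nonneg dist_nonneg, abs_of_nonneg (dist_nonneg.trans hdist₀)]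
    exact hdist₀
  -- `A` makes the comparison exact at `s₀ + K = t + N`, and `B` covers `s₀ ∈ [0, 1]`.
  have key := hα.cosh_dist_le_of_le x hs₀ (K := M + N) (k := M)
    (A := cosh (dist x (α (t + N))) * exp (-(t + N))) (B := cosh (c + 1) * exp 1) ?_ ?_
    (Nat.le_add_right M N)
  · rw [show s₀ + M = t from sub_add_cancel t M] at key
    convert key using 2 <;> rw [mul_assoc, ← exp_add] <;> ring_nf
  · have hexp : 1 ≤ exp 1 * exp (-s₀) := by
      rw [← exp_add]
      exact one_le_exp (by linarith)
    have := le_mul_of_one_le_right (cosh_pos (c + 1)).le hexp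
    have : 0 ≤ cosh (dist x (α (t + N))) * exp (-(t + N)) * exp s₀ := by positivity
    linarith
  · rw [show s₀ + ((M + N : ℕ) : ℝ) = t + N by push_cast; ring, mul_assoc, ← exp_add,
      neg_add_cancel, exp_zero, mul_one]
    exact le_add_of_nonneg_right (by positivity)

theorem dist_add_sub_dist_le (hα : IsRay α) {x : ℍ} {c : ℝ} (hc : dist x (α 0) ≤ c) {t : ℝ}
    (ht : 0 ≤ t) (N : ℕ) :
    dist x (α t) + N - dist x (α (t + N))
      ≤ (exp (2 * c) + 2 * exp (c + 1) * cosh (c + 1)) * exp (-(2 * t)) := by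
  set d := dist x (α t)
  set D := dist x (α (t + N))
  have hD : t + N - c ≤ D := by
    have h0 := hα.dist_add le_rfl (add_nonneg ht N.cast_nonneg)
    rw [zero_add] at h0
    linarith [dist_triangle_left (α 0) (α (t + N)) x]
  rw [← exp_le_exp]
  calc exp (d + N - D) = exp d * exp (N - D) := by rw [← exp_add]; ring_nf
    _ ≤ 2 * cosh d * exp (N - D) := by
        gcongr
        rw [cosh_eq]
        linarith [exp_pos (-d)]
    _ ≤ 2 * (cosh D * exp (-N) + cosh (c + 1) * exp (1 - t)) * exp (N - D) := by
        gcongr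
        exact hα.cosh_dist_le hc ht N
    _ = 1 + exp (-(2 * D)) + 2 * cosh (c + 1) * exp (1 - t + N - D) := by
        rw [cosh_eq]
        simp only [sub_eq_add_neg, two_mul, exp_add, exp_neg, neg_add]
        field_simp
        ring
    _ ≤ 1 + exp (2 * c - 2 * t) + 2 * cosh (c + 1) * exp (c + 1 - 2 * t) := by
        gcongr 1 + exp ?_ + _ * exp ?_ <;> linarith
    _ ≤ exp ((exp (2 * c) + 2 * exp (c + 1) * cosh (c + 1)) * exp (-(2 * t))) := by
        refine le_of_eq_of_le ?_ (add_one_le_exp _)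
        simp only [sub_eq_add_neg, exp_add]
        ring

end IsRay

theorem busemann_uniform_approximation_general (o : ℍ) (r ε : ℝ) (hε : 0 < ε) :
    ∃ T : ℝ, 0 ≤ T ∧
      ∀ α : ℝ → ℍ,
        (∀ s t : ℝ, 0 ≤ s → 0 ≤ t → dist (α s) (α t) = |s - t|) →
        α 0 ∈ closedBall o r →
        ∀ x ∈ closedBall o r, ∀ y ∈ closedBall o r, ∀ L : ℝ,
          Tendsto (fun t : ℝ => dist x (α t) - dist (α t) y) atTop (nhds L) →
          ∀ t : ℝ, T ≤ t → |L - (dist x (α t) - dist (α t) y)| ≤ ε := by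
  set C := exp (2 * (2 * r)) + 2 * exp (2 * r + 1) * cosh (2 * r + 1)
  have hdecay : Tendsto (fun t => C * exp (-(2 * t))) atTop (nhds 0) := by
    simpa using (tendsto_exp_neg_atTop_nhds_zero.comp
      (tendsto_id.const_mul_atTop two_pos)).const_mul C
  obtain ⟨T, hT⟩ := eventually_atTop.1 (hdecay.eventually (ge_mem_nhds hε))
  refine ⟨max T 0, le_max_right _ _, fun α hα hα0 x hx y hy L hL t ht => ?_⟩
  have hball {z : ℍ} (hz : z ∈ closedBall o r) : dist z (α 0) ≤ 2 * r := by
    linarith [dist_triangle_right z (α 0) o, mem_closedBall.1 hz, mem_closedBall.1 hα0]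
  have ht₀ : 0 ≤ t := le_of_max_le_right ht
  have hCt := hT t (le_of_max_le_left ht)
  exact IsRay.abs_busemann_sub_le hα ht₀ hL
    (fun N => (IsRay.dist_add_sub_dist_le hα (hball hx) ht₀ N).trans hCt)
    (fun N => (IsRay.dist_add_sub_dist_le hα (hball hy) ht₀ N).trans hCt)

/-- **Uniform Approximation.** In the hyperbolic plane, for every ball
`closedBall o r` and every `ε > 0` there is `T ≥ 0` such that for every ray `α` issuing
from the ball, every `x, y` in the ball and every `t ≥ T`, the Busemann function of `α`
is `ε`-approximated by its cocycle: `|B_α(x,y) − (dist x (α t) − dist (α t) y)| ≤ ε`. -/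
theorem busemann_uniform_approximation (o : ℍ) (r ε : ℝ) (hr : 0 < r) (hε : 0 < ε) :
    ∃ T : ℝ, 0 ≤ T ∧
      ∀ α : ℝ → ℍ,
        (∀ s t : ℝ, 0 ≤ s → 0 ≤ t → dist (α s) (α t) = |s - t|) →
        α 0 ∈ closedBall o r →
        ∀ x ∈ closedBall o r, ∀ y ∈ closedBall o r, ∀ L : ℝ,
          Tendsto (fun t : ℝ => dist x (α t) - dist (α t) y) atTop (nhds L) →
          ∀ t : ℝ, T ≤ t → |L - (dist x (α t) - dist (α t) y)| ≤ ε :=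
  busemann_uniform_approximation_general o r ε hε
end

section
/- Let ℍ be the hyperbolic plane realized as the upper half-plane, and let A = {z ∈ ℍ : Re z = 0} be the imaginary axis. For p ∈ ℍ let q(p) ∈ A be the point with Im q(p) = |p| and Re q(p) = 0 (the nearest-point projection of p onto A). Then for all p₁, p₂ ∈ ℍ: sinh (dist p₁ p₂) ≥ cosh (dist p₁ (q p₁)) · sinh (dist (q p₁) (q p₂)). In particular, if dist p₁ A = ε > 0 and dist (q p₁) (q p₂) = t, then dist p₁ p₂ ≥ t + δ(t,ε) for a positive quantity δ(t,ε) = arsinh(cosh ε · sinh t) − t, which is increasing in t. -/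
/-!
In the upper half-plane `sinh d(z, w) = |z - w| |z - w̄| / (2 Im z Im w)`; hence
`cosh d(p, q p) = |p| / Im p` and `sinh d(q p₁, q p₂) = ||p₁|² - |p₂|²| / (2 |p₁| |p₂|)`.
The inequality then reduces to `Im p₂ · ||p₁|² - |p₂|²| ≤ |p₂| |p₁ - p₂| |p₁ - p̄₂|`, which is
`|Im u| ≤ |u|` for `u = p̄₂ (p₁ - p₂) (p₂ - p̄₁)`. The remaining claims hold because `arsinh` is
increasing and, for `c > 1`, `t ↦ arsinh (c sinh t) - t` vanishes at `0` and has derivative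
`c cosh t / √(1 + c² sinh² t) - 1 > 0`.
-/

open Filter UpperHalfPlane Real

/-- The nearest-point projection of a point `p` of the upper half-plane onto the
imaginary axis `A = {z : Re z = 0}`: the point with real part `0` and imaginary part
the Euclidean modulus `|p|`. -/
noncomputable def axisProj (p : ℍ) : ℍ :=
  ⟨Complex.I * (‖(p : ℂ)‖ : ℂ), by
    have hne : (p : ℂ) ≠ 0 := p.ne_zero
    simp [Complex.mul_im, hne, norm_pos_iff.mpr hne]⟩

open ComplexConjugate

theorem Complex.abs_im_mul_sq_norm_sub_le (z w : ℂ) :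
    |w.im * (‖z‖ ^ 2 - ‖w‖ ^ 2)| ≤ ‖w‖ * (dist z w * dist z (conj w)) := by
  -- `w̄ (z - w) (w - z̄) = ‖w‖² (z + z̄) - ‖z‖² w̄ - ‖w‖² w`, whose imaginary part is the left side
  have him : (conj w * (z - w) * (w - conj z)).im = w.im * (‖z‖ ^ 2 - ‖w‖ ^ 2) := by
    simp only [Complex.mul_im, Complex.mul_re, Complex.sub_re, Complex.sub_im, Complex.conj_re,
      Complex.conj_im, Complex.sq_norm, Complex.normSq_apply]
    ring
  have hnorm : ‖conj w * (z - w) * (w - conj z)‖ = ‖w‖ * (dist z w * dist z (conj w)) := by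
    rw [norm_mul, norm_mul, Complex.norm_conj, ← Complex.dist_eq, ← Complex.dist_eq, dist_comm w,
      Complex.dist_conj_comm, mul_assoc]
  exact him ▸ hnorm ▸ Complex.abs_im_le_norm _

namespace UpperHalfPlane

theorem sinh_dist (z w : ℍ) :
    sinh (dist z w) = dist (z : ℂ) w * dist (z : ℂ) (conj (w : ℂ)) / (2 * z.im * w.im) := by
  have hsqrt : √(z.im * w.im) ^ 2 = z.im * w.im := sq_sqrt (by positivity)
  rw [show dist z w = 2 * (dist z w / 2) by ring, sinh_two_mul, sinh_half_dist, cosh_half_dist]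
  field_simp
  rw [hsqrt]
  ring

end UpperHalfPlane

theorem axisProj_re (p : ℍ) : (axisProj p).re = 0 := by
  simp [axisProj, UpperHalfPlane.re]

theorem axisProj_im (p : ℍ) : (axisProj p).im = ‖(p : ℂ)‖ := by
  simp [axisProj, UpperHalfPlane.im]

theorem cosh_dist_axisProj (p : ℍ) : cosh (dist p (axisProj p)) = ‖(p : ℂ)‖ / p.im := by
  have hp : ‖(p : ℂ)‖ ^ 2 = p.re ^ 2 + p.im ^ 2 := by
    rw [Complex.sq_norm, Complex.normSq_apply]; simp only [coe_re, coe_im]; ring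
  have hr : 0 < ‖(p : ℂ)‖ := norm_pos_iff.mpr p.ne_zero
  rw [cosh_dist', axisProj_re, axisProj_im]
  field_simp
  linear_combination hp.symm

theorem sinh_dist_axisProj (p q : ℍ) :
    sinh (dist (axisProj p) (axisProj q)) =
      |‖(p : ℂ)‖ ^ 2 - ‖(q : ℂ)‖ ^ 2| / (2 * ‖(p : ℂ)‖ * ‖(q : ℂ)‖) := by
  have hdist : dist (axisProj p : ℂ) (axisProj q) = |‖(p : ℂ)‖ - ‖(q : ℂ)‖| := by
    simp [axisProj, Complex.dist_eq, ← mul_sub, ← Complex.ofReal_sub, Complex.norm_real]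
  have hdist_conj : dist (axisProj p : ℂ) (conj (axisProj q : ℂ)) = ‖(p : ℂ)‖ + ‖(q : ℂ)‖ := by
    simp [axisProj, Complex.dist_eq, ← mul_add, ← Complex.ofReal_add, Complex.norm_real,
      abs_of_nonneg, add_nonneg]
  rw [sinh_dist, hdist, hdist_conj, axisProj_im, axisProj_im, sq_sub_sq, abs_mul,
    abs_of_nonneg (by positivity : 0 ≤ ‖(p : ℂ)‖ + ‖(q : ℂ)‖)]
  ring

theorem cosh_dist_axisProj_mul_sinh_dist_le (p₁ p₂ : ℍ) :
    cosh (dist p₁ (axisProj p₁)) * sinh (dist (axisProj p₁) (axisProj p₂)) ≤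
      sinh (dist p₁ p₂) := by
  have hy₂ := p₂.im_pos
  have hr₁ : 0 < ‖(p₁ : ℂ)‖ := norm_pos_iff.mpr p₁.ne_zero
  have hr₂ : 0 < ‖(p₂ : ℂ)‖ := norm_pos_iff.mpr p₂.ne_zero
  rw [cosh_dist_axisProj, sinh_dist_axisProj, sinh_dist]
  calc ‖(p₁ : ℂ)‖ / p₁.im * (|‖(p₁ : ℂ)‖ ^ 2 - ‖(p₂ : ℂ)‖ ^ 2| / (2 * ‖(p₁ : ℂ)‖ * ‖(p₂ : ℂ)‖))
      = |p₂.im * (‖(p₁ : ℂ)‖ ^ 2 - ‖(p₂ : ℂ)‖ ^ 2)| / (2 * p₁.im * p₂.im * ‖(p₂ : ℂ)‖) := by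
        rw [abs_mul, abs_of_pos hy₂]; field_simp
    _ ≤ ‖(p₂ : ℂ)‖ * (dist (p₁ : ℂ) p₂ * dist (p₁ : ℂ) (conj (p₂ : ℂ))) /
          (2 * p₁.im * p₂.im * ‖(p₂ : ℂ)‖) := by
        gcongr; exact Complex.abs_im_mul_sq_norm_sub_le p₁ p₂
    _ = _ := by field_simp

theorem strictMono_arsinh_mul_sinh_sub {c : ℝ} (hc : 1 < c) :
    StrictMono fun t => arsinh (c * sinh t) - t := by
  refine strictMono_of_deriv_pos fun x => ?_
  have hderiv : HasDerivAt (fun t => arsinh (c * sinh t) - t)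
      ((√(1 + (c * sinh x) ^ 2))⁻¹ * (c * cosh x) - 1) x :=
    ((hasDerivAt_arsinh _).comp x ((hasDerivAt_sinh x).const_mul c)).sub (hasDerivAt_id x)
  have hsqrt : √(1 + (c * sinh x) ^ 2) < c * cosh x := by
    rw [sqrt_lt' (by positivity), mul_pow, mul_pow, cosh_sq]
    nlinarith [sq_nonneg (sinh x)]
  rw [hderiv.deriv, sub_pos, inv_mul_eq_div, one_lt_div (by positivity)]
  exact hsqrt

/-- In the hyperbolic plane (upper half-plane model), with `q p` the
nearest-point projection of `p` onto the imaginary axis: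
`sinh (dist p₁ p₂) ≥ cosh (dist p₁ (q p₁)) · sinh (dist (q p₁) (q p₂))` for all `p₁, p₂`.
In particular, if `dist p₁ A = ε > 0` and `dist (q p₁) (q p₂) = t`, then
`dist p₁ p₂ ≥ t + δ(t,ε)` with `δ(t,ε) = arsinh (cosh ε · sinh t) − t`, a quantity which
is positive (for `t > 0`) and increasing in `t`. -/
theorem hyperbolic_projection_inequality :
    (∀ p₁ p₂ : ℍ,
      Real.cosh (dist p₁ (axisProj p₁)) * Real.sinh (dist (axisProj p₁) (axisProj p₂)) ≤
        Real.sinh (dist p₁ p₂)) ∧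
    (∀ (p₁ p₂ : ℍ) (ε t : ℝ), 0 < ε → dist p₁ (axisProj p₁) = ε →
      dist (axisProj p₁) (axisProj p₂) = t →
      t + (Real.arsinh (Real.cosh ε * Real.sinh t) - t) ≤ dist p₁ p₂) ∧
    (∀ ε t : ℝ, 0 < ε → 0 < t →
      0 < Real.arsinh (Real.cosh ε * Real.sinh t) - t) ∧
    (∀ ε : ℝ, 0 < ε →
      StrictMonoOn (fun t : ℝ => Real.arsinh (Real.cosh ε * Real.sinh t) - t)
        (Set.Ici 0)) := by
  refine ⟨cosh_dist_axisProj_mul_sinh_dist_le, ?_, ?_, ?_⟩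
  · rintro p₁ p₂ ε t - rfl rfl
    rw [add_sub_cancel, ← arsinh_sinh (dist p₁ p₂), arsinh_le_arsinh]
    exact cosh_dist_axisProj_mul_sinh_dist_le p₁ p₂
  · intro ε t hε ht
    simpa using strictMono_arsinh_mul_sinh_sub (one_lt_cosh.2 hε.ne') ht
  · exact fun ε hε => (strictMono_arsinh_mul_sinh_sub (one_lt_cosh.2 hε.ne')).strictMonoOn _
end
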